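/- arXiv:2510.17216 — 2 statements merged into one kernel-verified Lean document; each statement's English description precedes it below -/
import Mathlib

section
/- Under the hypotheses of Theorem 3.3 (so that the (m,k)-Hom-crossed product multiplication makes A ⊗ H a monoidal Hom-algebra and the m-Hom-smash coproduct makes A ⊗ H a monoidal Hom-coalgebra, with σ a twisted comodule cocycle), suppose the comultiplication Δ of the smash coproduct satisfies Δ((a♯1_H)(b♯1_H)) = Δ(a♯1_H)Δ(b♯1_H), Δ((a♯1_H)(1_A♯g)) = Δ(a♯1_H)Δ(1_A♯g), Δ((1_A♯h)(b♯1_H)) = Δ(1_A♯h)Δ(b♯1_H), and Δ((1_A♯h)(1_A♯g)) = Δ(1_A♯h)Δ(1_A♯g) for all a, b ∈ A and h, g ∈ H. Then Δ((a♯h)(b♯g)) = Δ(a♯h)Δ(b♯g) for all a, b ∈ A and h, g ∈ H. -/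
open TensorProduct

noncomputable section

/-- A monoidal Hom-algebra `(A, β)`. -/
structure HomAlgebraStr (K : Type*) (A : Type*) [Field K] [AddCommGroup A] [Module K A] where
  mul : A →ₗ[K] A →ₗ[K] A
  one : A
  str : A ≃ₗ[K] A
  hom_assoc : ∀ a b c : A, mul (str a) (mul b c) = mul (mul a b) (str c)
  str_mul : ∀ a b : A, str (mul a b) = mul (str a) (str b)
  mul_one : ∀ a : A, mul a one = str a
  one_mul : ∀ a : A, mul one a = str a
  str_one : str one = one

/-- A monoidal Hom-coalgebra `(C, γ)`. -/
structure HomCoalgebraStr (K : Type*) (C : Type*) [Field K] [AddCommGroup C] [Module K C] where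
  comul : C →ₗ[K] C ⊗[K] C
  counit : C →ₗ[K] K
  str : C ≃ₗ[K] C
  hom_coassoc : ∀ c : C,
    TensorProduct.map str.symm.toLinearMap comul (comul c)
      = TensorProduct.assoc K C C C (TensorProduct.map comul str.symm.toLinearMap (comul c))
  comul_str : ∀ c : C, comul (str c) = TensorProduct.map str.toLinearMap str.toLinearMap (comul c)
  counit_comul_left : ∀ c : C,
    TensorProduct.lid K C (TensorProduct.map counit (LinearMap.id : C →ₗ[K] C) (comul c)) = str.symm c
  counit_comul_right : ∀ c : C,
    TensorProduct.rid K C (TensorProduct.map (LinearMap.id : C →ₗ[K] C) counit (comul c)) = str.symm c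
  counit_str : ∀ c : C, counit (str c) = counit c

/-- The componentwise multiplication on `N ⊗ N` induced by a bilinear multiplication on `N`. -/
def tensorSquareMul {K N : Type*} [Field K] [AddCommGroup N] [Module K N]
    (mul : N →ₗ[K] N →ₗ[K] N) :
    (N ⊗[K] N) →ₗ[K] (N ⊗[K] N) →ₗ[K] (N ⊗[K] N) :=
  TensorProduct.curry
    ((TensorProduct.map (TensorProduct.lift mul) (TensorProduct.lift mul)) ∘ₗ
      (TensorProduct.tensorTensorTensorComm K N N N N).toLinearMap)

/-- A monoidal Hom-bialgebra `(H, α)`. -/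
structure HomBialgebraStr (K : Type*) (H : Type*) [Field K] [AddCommGroup H] [Module K H]
    extends HomAlgebraStr K H where
  comul : H →ₗ[K] H ⊗[K] H
  counit : H →ₗ[K] K
  hom_coassoc : ∀ c : H,
    TensorProduct.map str.symm.toLinearMap comul (comul c)
      = TensorProduct.assoc K H H H (TensorProduct.map comul str.symm.toLinearMap (comul c))
  comul_str : ∀ c : H, comul (str c) = TensorProduct.map str.toLinearMap str.toLinearMap (comul c)
  counit_comul_left : ∀ c : H,
    TensorProduct.lid K H (TensorProduct.map counit (LinearMap.id : H →ₗ[K] H) (comul c)) = str.symm c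
  counit_comul_right : ∀ c : H,
    TensorProduct.rid K H (TensorProduct.map (LinearMap.id : H →ₗ[K] H) counit (comul c)) = str.symm c
  counit_str : ∀ c : H, counit (str c) = counit c
  comul_mul : ∀ a b : H, comul (mul a b) = tensorSquareMul mul (comul a) (comul b)
  comul_one : comul one = one ⊗ₜ[K] one
  counit_mul : ∀ a b : H, counit (mul a b) = counit a * counit b
  counit_one : counit one = 1

/-- A monoidal Hom-Hopf algebra `(H, α, S)`. -/
structure HomHopfStr (K : Type*) (H : Type*) [Field K] [AddCommGroup H] [Module K H]
    extends HomBialgebraStr K H where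
  antipode : H →ₗ[K] H
  antipode_str : ∀ h : H, antipode (str h) = str (antipode h)
  antipode_mul_left : ∀ h : H,
    TensorProduct.lift (mul ∘ₗ antipode) (comul h) = counit h • one
  antipode_mul_right : ∀ h : H,
    TensorProduct.lift (mul.compl₂ antipode) (comul h) = counit h • one

section Defs

variable {K H A C M : Type*} [Field K]
variable [AddCommGroup H] [Module K H] [AddCommGroup A] [Module K A]
variable [AddCommGroup C] [Module K C] [AddCommGroup M] [Module K M]

/-- `(A, β)` is a left weak `(H, α)`-Hom-module algebra via `act`:
`h·(ab) = (h₁·a)(h₂·b)` and `h·1 = ε(h)1`. -/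
structure IsWeakModuleAlgebra (HB : HomBialgebraStr K H) (AA : HomAlgebraStr K A)
    (act : H →ₗ[K] A →ₗ[K] A) : Prop where
  act_mul : ∀ (h : H) (a b : A),
    act h (AA.mul a b)
      = TensorProduct.lift AA.mul
          (TensorProduct.map (TensorProduct.lift act) (TensorProduct.lift act)
            (TensorProduct.map ((TensorProduct.mk K H A).flip a) ((TensorProduct.mk K H A).flip b)
              (HB.comul h)))
  act_one : ∀ h : H, act h AA.one = HB.counit h • AA.one

/-- `(C, β)` is a left `(H, α)`-Hom-comodule coalgebra via `coact a = a₍₋₁₎ ⊗ a₍₀₎`. -/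
structure IsComoduleCoalgebra (HB : HomBialgebraStr K H) (CC : HomCoalgebraStr K C)
    (coact : C →ₗ[K] H ⊗[K] C) : Prop where
  comodule_coassoc : ∀ c : C,
    TensorProduct.assoc K H H C
        (TensorProduct.map HB.comul CC.str.symm.toLinearMap (coact c))
      = TensorProduct.map HB.str.symm.toLinearMap coact (coact c)
  coact_str : ∀ c : C,
    coact (CC.str c) = TensorProduct.map HB.str.toLinearMap CC.str.toLinearMap (coact c)
  counit_coact : ∀ c : C,
    TensorProduct.lid K C (TensorProduct.map HB.counit (LinearMap.id : C →ₗ[K] C) (coact c))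
      = CC.str.symm c
  coact_comul : ∀ c : C,
    TensorProduct.map (LinearMap.id : H →ₗ[K] H) CC.comul (coact c)
      = TensorProduct.map (TensorProduct.lift HB.mul) (LinearMap.id : C ⊗[K] C →ₗ[K] C ⊗[K] C)
          (TensorProduct.tensorTensorTensorComm K H C H C
            (TensorProduct.map coact coact (CC.comul c)))
  counit_coact_one : ∀ c : C,
    TensorProduct.rid K H (TensorProduct.map (LinearMap.id : H →ₗ[K] H) CC.counit (coact c))
      = CC.counit c • HB.one

/-- The `(m,k)`-Hom-crossed product multiplication on simple tensors:
`(a ♯ h)(b ♯ g) = a[(α^m(h₁₁)·β⁻²(b)) σ(α^{k+1}(h₁₂), α^k(g₁))] ♯ α(h₂g₂)`. -/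
def cpMulElem (HB : HomBialgebraStr K H) (AA : HomAlgebraStr K A)
    (act : H →ₗ[K] A →ₗ[K] A) (σ : H →ₗ[K] H →ₗ[K] A) (m k : ℤ)
    (a : A) (h : H) (b : A) (g : H) : A ⊗[K] H :=
  TensorProduct.map
    ((AA.mul a) ∘ₗ TensorProduct.lift AA.mul ∘ₗ
      TensorProduct.map
        ((act.flip ((AA.str ^ (-2 : ℤ)) b)) ∘ₗ (HB.str ^ m).toLinearMap)
        (TensorProduct.lift σ ∘ₗ
          TensorProduct.map (HB.str ^ (k+1)).toLinearMap (HB.str ^ k).toLinearMap) ∘ₗ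
      (TensorProduct.assoc K H H H).toLinearMap)
    (HB.str.toLinearMap ∘ₗ TensorProduct.lift HB.mul)
    (TensorProduct.map (TensorProduct.map HB.comul (LinearMap.id : H →ₗ[K] H))
      (LinearMap.id : H ⊗[K] H →ₗ[K] H ⊗[K] H)
      (TensorProduct.tensorTensorTensorComm K H H H H (HB.comul h ⊗ₜ[K] HB.comul g)))

/-- The `m`-Hom-smash product multiplication on simple tensors:
`(a ♯ h)(b ♯ g) = a(α^m(h₁)·β⁻¹(b)) ♯ α(h₂)g`. -/
def smashMulElem (HB : HomBialgebraStr K H) (AA : HomAlgebraStr K A)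
    (act : H →ₗ[K] A →ₗ[K] A) (m : ℤ) (a : A) (h : H) (b : A) (g : H) : A ⊗[K] H :=
  TensorProduct.map
    ((AA.mul a) ∘ₗ (act.flip ((AA.str ^ (-1 : ℤ)) b)) ∘ₗ (HB.str ^ m).toLinearMap)
    ((HB.mul.flip g) ∘ₗ HB.str.toLinearMap)
    (HB.comul h)

/-- The `m`-Hom-smash coproduct comultiplication on simple tensors:
`Δ(a ⋊ h) = (a₁ ⋊ α^m(a₂₍₋₁₎)α⁻¹(h₁)) ⊗ (β(a₂₍₀₎) ⋊ h₂)`. -/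
def scComulElem (HB : HomBialgebraStr K H) (AC : HomCoalgebraStr K A)
    (coact : A →ₗ[K] H ⊗[K] A) (m : ℤ) (a : A) (h : H) :
    (A ⊗[K] H) ⊗[K] (A ⊗[K] H) :=
  TensorProduct.map
    (TensorProduct.map (LinearMap.id : A →ₗ[K] A)
        (TensorProduct.lift HB.mul ∘ₗ
          TensorProduct.map (HB.str ^ m).toLinearMap (HB.str ^ (-1 : ℤ)).toLinearMap) ∘ₗ
      (TensorProduct.assoc K A H H).toLinearMap)
    (TensorProduct.map AC.str.toLinearMap (LinearMap.id : H →ₗ[K] H))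
    (TensorProduct.tensorTensorTensorComm K (A ⊗[K] H) A H H
      ((TensorProduct.assoc K A H A).symm
          (TensorProduct.map (LinearMap.id : A →ₗ[K] A) coact (AC.comul a)) ⊗ₜ[K] HB.comul h))

/-- Condition (1) of Theorem 2.3. -/
def CPCond1 (HB : HomBialgebraStr K H) (AA : HomAlgebraStr K A)
    (σ : H →ₗ[K] H →ₗ[K] A) : Prop :=
  (∀ h : H, σ h HB.one = HB.counit h • AA.one) ∧
  (∀ h : H, σ HB.one h = HB.counit h • AA.one) ∧
  (∀ h g : H, σ (HB.str h) (HB.str g) = AA.str (σ h g))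

/-- Condition (2) of Theorem 2.3:
`[α^m(h₁l₁)·a] σ(α^{k+2}(h₂), α^{k+2}(l₂)) = σ(α^{k+2}(h₁), α^{k+2}(l₁)) [α^m(h₂l₂)·a]`. -/
def CPCond2 (HB : HomBialgebraStr K H) (AA : HomAlgebraStr K A)
    (act : H →ₗ[K] A →ₗ[K] A) (σ : H →ₗ[K] H →ₗ[K] A) (m k : ℤ) : Prop :=
  ∀ (h l : H) (a : A),
    TensorProduct.lift AA.mul
      (TensorProduct.map
        ((act.flip a) ∘ₗ (HB.str ^ m).toLinearMap ∘ₗ TensorProduct.lift HB.mul)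
        (TensorProduct.lift σ ∘ₗ
          TensorProduct.map (HB.str ^ (k+2)).toLinearMap (HB.str ^ (k+2)).toLinearMap)
        (TensorProduct.tensorTensorTensorComm K H H H H (HB.comul h ⊗ₜ[K] HB.comul l)))
    =
    TensorProduct.lift AA.mul
      (TensorProduct.map
        (TensorProduct.lift σ ∘ₗ
          TensorProduct.map (HB.str ^ (k+2)).toLinearMap (HB.str ^ (k+2)).toLinearMap)
        ((act.flip a) ∘ₗ (HB.str ^ m).toLinearMap ∘ₗ TensorProduct.lift HB.mul)
        (TensorProduct.tensorTensorTensorComm K H H H H (HB.comul h ⊗ₜ[K] HB.comul l)))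

/-- Condition (3) of Theorem 2.3:
`[α^{m+1}(h₁)·σ(α^{k+1}(l₁), α^{k+1}(g₁))] σ(α^{k+2}(h₂), α^{k+1}(l₂g₂))
  = σ(α^{k+2}(h₁), α^{k+2}(l₁)) σ(α^{k+1}(h₂l₂), α^{k+1}(g))`. -/
def CPCond3 (HB : HomBialgebraStr K H) (AA : HomAlgebraStr K A)
    (act : H →ₗ[K] A →ₗ[K] A) (σ : H →ₗ[K] H →ₗ[K] A) (m k : ℤ) : Prop :=
  ∀ h l g : H,
    TensorProduct.lift AA.mul
      (TensorProduct.map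
        (TensorProduct.lift act ∘ₗ
          TensorProduct.map (HB.str ^ (m+1)).toLinearMap
            (TensorProduct.lift σ ∘ₗ
              TensorProduct.map (HB.str ^ (k+1)).toLinearMap (HB.str ^ (k+1)).toLinearMap))
        (TensorProduct.lift σ ∘ₗ
          TensorProduct.map (HB.str ^ (k+2)).toLinearMap
            ((HB.str ^ (k+1)).toLinearMap ∘ₗ TensorProduct.lift HB.mul))
        (TensorProduct.tensorTensorTensorComm K H H (H ⊗[K] H) (H ⊗[K] H)
          (HB.comul h ⊗ₜ[K]
            (TensorProduct.tensorTensorTensorComm K H H H H (HB.comul l ⊗ₜ[K] HB.comul g)))))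
    =
    TensorProduct.lift AA.mul
      (TensorProduct.map
        (TensorProduct.lift σ ∘ₗ
          TensorProduct.map (HB.str ^ (k+2)).toLinearMap (HB.str ^ (k+2)).toLinearMap)
        ((σ.flip ((HB.str ^ (k+1)) g)) ∘ₗ (HB.str ^ (k+1)).toLinearMap ∘ₗ TensorProduct.lift HB.mul)
        (TensorProduct.tensorTensorTensorComm K H H H H (HB.comul h ⊗ₜ[K] HB.comul l)))

/-- `σ` is a twisted comodule cocycle:
`β(a₁) ⊗ α^{m+1}(a₂₍₋₁₎)g ⊗ a₂₍₀₎
  = a₁σ(α^{k+m+2}(a₂₍₋₁₎₁), α^{k+1}(g₁)) ⊗ α^{m+2}(a₂₍₋₁₎₂)α(g₂) ⊗ a₂₍₀₎`. -/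
def IsTwistedCocycle (HB : HomBialgebraStr K H) (AA : HomAlgebraStr K A)
    (AC : HomCoalgebraStr K A) (coact : A →ₗ[K] H ⊗[K] A)
    (σ : H →ₗ[K] H →ₗ[K] A) (m k : ℤ) : Prop :=
  ∀ (a : A) (g : H),
    (TensorProduct.assoc K A H A).symm
      (TensorProduct.map AA.str.toLinearMap
        (TensorProduct.map ((HB.mul.flip g) ∘ₗ (HB.str ^ (m+1)).toLinearMap)
          (LinearMap.id : A →ₗ[K] A))
        (TensorProduct.map (LinearMap.id : A →ₗ[K] A) coact (AC.comul a)))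
    =
    TensorProduct.map
      (TensorProduct.map (TensorProduct.lift AA.mul) (LinearMap.id : H →ₗ[K] H)
        ∘ₗ (TensorProduct.assoc K A A H).symm.toLinearMap
        ∘ₗ TensorProduct.map (LinearMap.id : A →ₗ[K] A)
            (TensorProduct.map
              (TensorProduct.lift σ ∘ₗ
                TensorProduct.map (HB.str ^ (k+m+2)).toLinearMap (HB.str ^ (k+1)).toLinearMap)
              (TensorProduct.lift HB.mul ∘ₗ
                TensorProduct.map (HB.str ^ (m+2)).toLinearMap HB.str.toLinearMap)
            ∘ₗ (TensorProduct.tensorTensorTensorComm K H H H H).toLinearMap)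
        ∘ₗ (TensorProduct.assoc K A (H ⊗[K] H) (H ⊗[K] H)).toLinearMap)
      (LinearMap.id : A →ₗ[K] A)
      ((TensorProduct.assoc K (A ⊗[K] (H ⊗[K] H)) (H ⊗[K] H) A).symm
        (TensorProduct.map (LinearMap.id : A ⊗[K] (H ⊗[K] H) →ₗ[K] A ⊗[K] (H ⊗[K] H))
          (TensorProduct.comm K A (H ⊗[K] H)).toLinearMap
          (TensorProduct.assoc K (A ⊗[K] (H ⊗[K] H)) A (H ⊗[K] H)
            ((TensorProduct.assoc K A (H ⊗[K] H) A).symm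
                (TensorProduct.map (LinearMap.id : A →ₗ[K] A)
                  (TensorProduct.map HB.comul (LinearMap.id : A →ₗ[K] A))
                  (TensorProduct.map (LinearMap.id : A →ₗ[K] A) coact (AC.comul a)))
              ⊗ₜ[K] HB.comul g))))

/-- Auxiliary map `(n ⊗ w) ⊗ t ↦ (α^j(n)·t) ⊗ f(w)` on `(H ⊗ M) ⊗ H`. -/
def coactMulAux (HB : HomBialgebraStr K H) (j : ℤ) (f : M →ₗ[K] M) :
    (H ⊗[K] M) ⊗[K] H →ₗ[K] H ⊗[K] M :=
  TensorProduct.map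
      (TensorProduct.lift HB.mul ∘ₗ
        TensorProduct.map (HB.str ^ j).toLinearMap (LinearMap.id : H →ₗ[K] H)) f
    ∘ₗ (TensorProduct.assoc K H H M).symm.toLinearMap
    ∘ₗ TensorProduct.map (LinearMap.id : H →ₗ[K] H) (TensorProduct.comm K M H).toLinearMap
    ∘ₗ (TensorProduct.assoc K H M H).toLinearMap

/-- (A1): `ε_A` is an algebra map. -/
def CondA1 (AA : HomAlgebraStr K A) (AC : HomCoalgebraStr K A) : Prop :=
  (∀ a b : A, AC.counit (AA.mul a b) = AC.counit a * AC.counit b) ∧ AC.counit AA.one = 1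

/-- (A2): `ε_A(h·a) = ε_H(h)ε_A(a)`. -/
def CondA2 (HB : HomBialgebraStr K H) (AC : HomCoalgebraStr K A)
    (act : H →ₗ[K] A →ₗ[K] A) : Prop :=
  ∀ (h : H) (a : A), AC.counit (act h a) = HB.counit h * AC.counit a

/-- (A3): `σ` is a coalgebra map. -/
def CondA3 (HB : HomBialgebraStr K H) (AC : HomCoalgebraStr K A)
    (σ : H →ₗ[K] H →ₗ[K] A) : Prop :=
  (∀ h g : H,
    AC.comul (σ h g)
      = TensorProduct.map (TensorProduct.lift σ) (TensorProduct.lift σ)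
          (TensorProduct.tensorTensorTensorComm K H H H H (HB.comul h ⊗ₜ[K] HB.comul g))) ∧
  (∀ h g : H, AC.counit (σ h g) = HB.counit h * HB.counit g)

/-- (A4): `Δ_A(1_A) = 1_A ⊗ 1_A`. -/
def CondA4 (AA : HomAlgebraStr K A) (AC : HomCoalgebraStr K A) : Prop :=
  AC.comul AA.one = AA.one ⊗ₜ[K] AA.one

/-- (A5): the coaction is an algebra map. -/
def CondA5 (HB : HomBialgebraStr K H) (AA : HomAlgebraStr K A)
    (coact : A →ₗ[K] H ⊗[K] A) : Prop :=
  (∀ a b : A,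
    coact (AA.mul a b)
      = TensorProduct.map (TensorProduct.lift HB.mul) (TensorProduct.lift AA.mul)
          (TensorProduct.tensorTensorTensorComm K H A H A (coact a ⊗ₜ[K] coact b))) ∧
  coact AA.one = HB.one ⊗ₜ[K] AA.one

/-- (A6). -/
def CondA6 (HB : HomBialgebraStr K H) (coact : A →ₗ[K] H ⊗[K] A)
    (σ : H →ₗ[K] H →ₗ[K] A) (m k : ℤ) : Prop :=
  ∀ h g : H,
    coactMulAux HB (m-1) (LinearMap.id : A →ₗ[K] A)
      (TensorProduct.map
        (coact ∘ₗ TensorProduct.lift σ ∘ₗ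
          TensorProduct.map (HB.str ^ (k+2)).toLinearMap (HB.str ^ (k+2)).toLinearMap)
        ((HB.str ^ (-1 : ℤ)).toLinearMap ∘ₗ TensorProduct.lift HB.mul)
        (TensorProduct.tensorTensorTensorComm K H H H H (HB.comul h ⊗ₜ[K] HB.comul g)))
    =
    TensorProduct.map (TensorProduct.lift HB.mul)
      (TensorProduct.lift σ ∘ₗ
        TensorProduct.map (HB.str ^ (k+1)).toLinearMap (HB.str ^ (k+1)).toLinearMap)
      (TensorProduct.tensorTensorTensorComm K H H H H (HB.comul h ⊗ₜ[K] HB.comul g))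

/-- (A7). -/
def CondA7 (HB : HomBialgebraStr K H) (AA : HomAlgebraStr K A) (AC : HomCoalgebraStr K A)
    (act : H →ₗ[K] A →ₗ[K] A) (coact : A →ₗ[K] H ⊗[K] A)
    (σ : H →ₗ[K] H →ₗ[K] A) (m k : ℤ) : Prop :=
  ∀ a b : A,
    AC.comul (AA.mul a b) =
      TensorProduct.map
        (TensorProduct.lift AA.mul
          ∘ₗ TensorProduct.map (LinearMap.id : A →ₗ[K] A)
              (TensorProduct.lift AA.mul
                ∘ₗ TensorProduct.map
                    (TensorProduct.lift act ∘ₗ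
                      TensorProduct.map (HB.str ^ (2*m)).toLinearMap (AA.str ^ (-2 : ℤ)).toLinearMap)
                    (TensorProduct.lift σ ∘ₗ
                      TensorProduct.map (HB.str ^ (k+m+1)).toLinearMap (HB.str ^ (k+m)).toLinearMap)
                ∘ₗ (TensorProduct.tensorTensorTensorComm K H H A H).toLinearMap)
          ∘ₗ (TensorProduct.assoc K A (H ⊗[K] H) (A ⊗[K] H)).toLinearMap)
        (AA.str.toLinearMap ∘ₗ TensorProduct.lift AA.mul)
        (TensorProduct.tensorTensorTensorComm K (A ⊗[K] (H ⊗[K] H)) A (A ⊗[K] H) A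
          ((TensorProduct.assoc K A (H ⊗[K] H) A).symm
              (TensorProduct.map (LinearMap.id : A →ₗ[K] A)
                (TensorProduct.map HB.comul (LinearMap.id : A →ₗ[K] A))
                (TensorProduct.map (LinearMap.id : A →ₗ[K] A) coact (AC.comul a)))
            ⊗ₜ[K]
            (TensorProduct.assoc K A H A).symm
              (TensorProduct.map (LinearMap.id : A →ₗ[K] A) coact (AC.comul b))))

/-- (A8). -/
def CondA8 (HB : HomBialgebraStr K H) (AA : HomAlgebraStr K A) (AC : HomCoalgebraStr K A)
    (act : H →ₗ[K] A →ₗ[K] A) (coact : A →ₗ[K] H ⊗[K] A)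
    (σ : H →ₗ[K] H →ₗ[K] A) (m k : ℤ) : Prop :=
  ∀ (h : H) (b : A),
    AC.comul (act ((HB.str ^ m) h) b) =
      TensorProduct.map
        (TensorProduct.lift AA.mul
          ∘ₗ TensorProduct.map
              (TensorProduct.lift act ∘ₗ
                TensorProduct.map (HB.str ^ m).toLinearMap (AA.str ^ (-1 : ℤ)).toLinearMap)
              (TensorProduct.lift σ ∘ₗ
                TensorProduct.map (HB.str ^ (k+1)).toLinearMap (HB.str ^ (k+m+1)).toLinearMap)
          ∘ₗ (TensorProduct.tensorTensorTensorComm K H H A H).toLinearMap)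
        (TensorProduct.lift act ∘ₗ
          TensorProduct.map (HB.str ^ m).toLinearMap AA.str.toLinearMap)
        (TensorProduct.tensorTensorTensorComm K (H ⊗[K] H) H (A ⊗[K] H) A
          (TensorProduct.map HB.comul (LinearMap.id : H →ₗ[K] H) (HB.comul h)
            ⊗ₜ[K]
            (TensorProduct.assoc K A H A).symm
              (TensorProduct.map (LinearMap.id : A →ₗ[K] A) coact (AC.comul b))))

/-- (A9). -/
def CondA9 (HB : HomBialgebraStr K H) (act : H →ₗ[K] A →ₗ[K] A)
    (coact : A →ₗ[K] H ⊗[K] A) (m : ℤ) : Prop :=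
  ∀ (h : H) (b : A),
    coactMulAux HB (m-1) (LinearMap.id : A →ₗ[K] A)
      (TensorProduct.map (coact ∘ₗ (act.flip b) ∘ₗ (HB.str ^ (m+1)).toLinearMap)
        (LinearMap.id : H →ₗ[K] H) (HB.comul h))
    =
    TensorProduct.map
      (TensorProduct.lift HB.mul ∘ₗ
        TensorProduct.map (LinearMap.id : H →ₗ[K] H) (HB.str ^ m).toLinearMap)
      (TensorProduct.lift act ∘ₗ
        TensorProduct.map (HB.str ^ m).toLinearMap (LinearMap.id : A →ₗ[K] A))
      (TensorProduct.tensorTensorTensorComm K H H H A (HB.comul h ⊗ₜ[K] coact b))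

/-- The Radford `[(m,k),m]`-biproduct structure on `A ⊗ H`. -/
structure IsRadfordBiproduct (HB : HomBialgebraStr K H) (AA : HomAlgebraStr K A)
    (AC : HomCoalgebraStr K A) (act : H →ₗ[K] A →ₗ[K] A) (coact : A →ₗ[K] H ⊗[K] A)
    (σ : H →ₗ[K] H →ₗ[K] A) (m k : ℤ) (B : HomBialgebraStr K (A ⊗[K] H)) : Prop where
  mul_def : ∀ (a : A) (h : H) (b : A) (g : H),
    B.mul (a ⊗ₜ[K] h) (b ⊗ₜ[K] g) = cpMulElem HB AA act σ m k a h b g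
  one_def : B.one = AA.one ⊗ₜ[K] HB.one
  comul_def : ∀ (a : A) (h : H), B.comul (a ⊗ₜ[K] h) = scComulElem HB AC coact m a h
  counit_def : ∀ (a : A) (h : H), B.counit (a ⊗ₜ[K] h) = AC.counit a * HB.counit h
  str_def : B.str = TensorProduct.congr AA.str HB.str

/-- `S_H` is a `σ`-antipode for `(H, α)`. -/
structure IsSigmaAntipode (HB : HomBialgebraStr K H) (AA : HomAlgebraStr K A)
    (σ : H →ₗ[K] H →ₗ[K] A) (S : H →ₗ[K] H) : Prop where
  antipode_str : ∀ h : H, S (HB.str h) = HB.str (S h)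
  right : ∀ h : H,
    TensorProduct.map (TensorProduct.lift σ) (TensorProduct.lift HB.mul)
        (TensorProduct.tensorTensorTensorComm K H H H H
          (TensorProduct.map HB.comul (HB.comul ∘ₗ S) (HB.comul h)))
      = HB.counit h • (AA.one ⊗ₜ[K] HB.one)
  left : ∀ h : H,
    TensorProduct.map (TensorProduct.lift σ) (TensorProduct.lift HB.mul)
        (TensorProduct.tensorTensorTensorComm K H H H H
          (TensorProduct.map (HB.comul ∘ₗ S) HB.comul (HB.comul h)))
      = HB.counit h • (AA.one ⊗ₜ[K] HB.one)

/-- `S_A` is a convolution inverse of `id_A`. -/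
def IsConvInvOfId (AA : HomAlgebraStr K A) (AC : HomCoalgebraStr K A)
    (SA : A →ₗ[K] A) : Prop :=
  (∀ a : A, TensorProduct.lift (AA.mul ∘ₗ SA) (AC.comul a) = AC.counit a • AA.one) ∧
  (∀ a : A, TensorProduct.lift (AA.mul.compl₂ SA) (AC.comul a) = AC.counit a • AA.one)

/-- `σ` and `σinv` are convolution inverses of each other. -/
def IsConvInvPair (HB : HomBialgebraStr K H) (AA : HomAlgebraStr K A)
    (σ σinv : H →ₗ[K] H →ₗ[K] A) : Prop :=
  (∀ h g : H,
    TensorProduct.lift AA.mul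
      (TensorProduct.map (TensorProduct.lift σ) (TensorProduct.lift σinv)
        (TensorProduct.tensorTensorTensorComm K H H H H (HB.comul h ⊗ₜ[K] HB.comul g)))
    = (HB.counit h * HB.counit g) • AA.one) ∧
  (∀ h g : H,
    TensorProduct.lift AA.mul
      (TensorProduct.map (TensorProduct.lift σinv) (TensorProduct.lift σ)
        (TensorProduct.tensorTensorTensorComm K H H H H (HB.comul h ⊗ₜ[K] HB.comul g)))
    = (HB.counit h * HB.counit g) • AA.one)

/-- The Radford antipode formula
`S(a ⊗ h) = (1_A ⊗ S_H(α^{m−1}(a₍₋₁₎)α⁻²(h)))·(S_A(a₍₀₎) ⊗ 1_H)`. -/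
def radfordAntipodeElem (HB : HomBialgebraStr K H) (AA : HomAlgebraStr K A)
    (coact : A →ₗ[K] H ⊗[K] A)
    (Bmul : (A ⊗[K] H) →ₗ[K] (A ⊗[K] H) →ₗ[K] (A ⊗[K] H))
    (SH : H →ₗ[K] H) (SA : A →ₗ[K] A) (m : ℤ) (a : A) (h : H) : A ⊗[K] H :=
  TensorProduct.lift Bmul
    (TensorProduct.map
      ((TensorProduct.mk K A H AA.one) ∘ₗ SH ∘ₗ (HB.mul.flip ((HB.str ^ (-2 : ℤ)) h)) ∘ₗ
        (HB.str ^ (m - 1)).toLinearMap)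
      (((TensorProduct.mk K A H).flip HB.one) ∘ₗ SA)
      (coact a))

/-- `φ^l(l ⊗ (a ⊗ h)) = (α(l₁₁)·β⁻¹(a)) σ(α^{k+2−m}(l₁₂), α^{k+1}(h₁)) ⊗ α^{1−m}(l₂)α(h₂)`. -/
def philElem (HB : HomBialgebraStr K H) (AA : HomAlgebraStr K A)
    (act : H →ₗ[K] A →ₗ[K] A) (σ : H →ₗ[K] H →ₗ[K] A) (m k : ℤ)
    (l : H) (a : A) (h : H) : A ⊗[K] H :=
  TensorProduct.map
    (TensorProduct.lift AA.mul ∘ₗ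
      TensorProduct.map ((act.flip ((AA.str ^ (-1 : ℤ)) a)) ∘ₗ HB.str.toLinearMap)
        (TensorProduct.lift σ ∘ₗ
          TensorProduct.map (HB.str ^ (k+2-m)).toLinearMap (HB.str ^ (k+1)).toLinearMap) ∘ₗ
      (TensorProduct.assoc K H H H).toLinearMap)
    (TensorProduct.lift HB.mul ∘ₗ
      TensorProduct.map (HB.str ^ (1-m)).toLinearMap HB.str.toLinearMap)
    (TensorProduct.map (TensorProduct.map HB.comul (LinearMap.id : H →ₗ[K] H))
      (LinearMap.id : H ⊗[K] H →ₗ[K] H ⊗[K] H)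
      (TensorProduct.tensorTensorTensorComm K H H H H (HB.comul l ⊗ₜ[K] HB.comul h)))

/-- `φ^r((a ⊗ h) ⊗ l) = a σ(α^{k+1}(h₁), α^{k+1−m}(l₁)) ⊗ α(h₂)α^{1−m}(l₂)`. -/
def phirElem (HB : HomBialgebraStr K H) (AA : HomAlgebraStr K A)
    (σ : H →ₗ[K] H →ₗ[K] A) (m k : ℤ) (a : A) (h : H) (l : H) : A ⊗[K] H :=
  TensorProduct.map
    ((AA.mul a) ∘ₗ TensorProduct.lift σ ∘ₗ
      TensorProduct.map (HB.str ^ (k+1)).toLinearMap (HB.str ^ (k+1-m)).toLinearMap)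
    (TensorProduct.lift HB.mul ∘ₗ
      TensorProduct.map HB.str.toLinearMap (HB.str ^ (1-m)).toLinearMap)
    (TensorProduct.tensorTensorTensorComm K H H H H (HB.comul h ⊗ₜ[K] HB.comul l))

/-- `(M, μ, φ)` is a left `(H, α, σ̄)`-Hom module. -/
def IsLeftSigmaHomModule (HB : HomBialgebraStr K H)
    (mulM : M →ₗ[K] M →ₗ[K] M) (strM : M →ₗ[K] M)
    (σbar : H →ₗ[K] H →ₗ[K] M) (φ : H →ₗ[K] M →ₗ[K] M) : Prop :=
  (∀ (g l : H) (x : M),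
    φ (HB.str g) (φ l x)
      = TensorProduct.lift mulM
          (TensorProduct.map (strM ∘ₗ TensorProduct.lift σbar)
            ((φ.flip x) ∘ₗ TensorProduct.lift HB.mul)
            (TensorProduct.tensorTensorTensorComm K H H H H (HB.comul g ⊗ₜ[K] HB.comul l))))
  ∧ (∀ x : M, φ HB.one x = strM x)

/-- `(M, μ, φ)` is a right `(H, α, σ̄)`-Hom module. -/
def IsRightSigmaHomModule (HB : HomBialgebraStr K H)
    (mulM : M →ₗ[K] M →ₗ[K] M) (strM : M →ₗ[K] M)
    (σbar : H →ₗ[K] H →ₗ[K] M) (φ : M →ₗ[K] H →ₗ[K] M) : Prop :=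
  (∀ (x : M) (l g : H),
    φ (φ x l) (HB.str g)
      = mulM (strM x)
          (TensorProduct.lift φ
            (TensorProduct.map (TensorProduct.lift σbar) (TensorProduct.lift HB.mul)
              (TensorProduct.tensorTensorTensorComm K H H H H (HB.comul l ⊗ₜ[K] HB.comul g)))))
  ∧ (∀ x : M, φ x HB.one = strM x)

/-- `(M, μ, φ⁺, φ⁻)` is a weak `(H, α)` Hom-bimodule. -/
def IsWeakHomBimodule (HB : HomBialgebraStr K H) (strM : M →ₗ[K] M)
    (φl : H →ₗ[K] M →ₗ[K] M) (φr : M →ₗ[K] H →ₗ[K] M) : Prop :=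
  (∀ x : M, φl HB.one x = strM x) ∧ (∀ x : M, φr x HB.one = strM x) ∧
  (∀ (h : H) (x : M) (g : H), φl (HB.str h) (φr x g) = φr (φl h x) (HB.str g))

/-- A weak `m`-Hom admissible mapping system `C ⇄ A ⇄ H`. -/
structure WeakAdmissibleSystem (HB : HomBialgebraStr K H)
    (CA : HomAlgebraStr K C) (CC : HomCoalgebraStr K C)
    (coact : C →ₗ[K] H ⊗[K] C) (m : ℤ) (AB : HomBialgebraStr K A)
    (j : C →ₗ[K] A) (p : A →ₗ[K] C) (i : H →ₗ[K] A) (π : A →ₗ[K] H) : Prop where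
  c_str_eq : CA.str = CC.str
  p_j : ∀ c : C, p (j c) = c
  pi_i : ∀ h : H, π (i h) = h
  pi_mul : ∀ a b : A, π (AB.mul a b) = HB.mul (π a) (π b)
  pi_one : π AB.one = HB.one
  pi_str : ∀ a : A, π (AB.str a) = HB.str (π a)
  pi_comul : ∀ a : A, TensorProduct.map π π (AB.comul a) = HB.comul (π a)
  pi_counit : ∀ a : A, HB.counit (π a) = AB.counit a
  i_one : i HB.one = AB.one
  i_str : ∀ h : H, i (HB.str h) = AB.str (i h)
  i_comul : ∀ h : H, TensorProduct.map i i (HB.comul h) = AB.comul (i h)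
  i_counit : ∀ h : H, AB.counit (i h) = HB.counit h
  p_str : ∀ a : A, p (AB.str a) = CC.str (p a)
  p_comul : ∀ a : A, TensorProduct.map p p (AB.comul a) = CC.comul (p a)
  p_counit : ∀ a : A, CC.counit (p a) = AB.counit a
  j_mul : ∀ c d : C, j (CA.mul c d) = AB.mul (j c) (j d)
  j_one : j CA.one = AB.one
  j_str : ∀ c : C, j (CC.str c) = AB.str (j c)
  p_left_act : ∀ (h : H) (a : A),
    p (AB.mul (i ((HB.str ^ (-m)) h)) a) = HB.counit h • CC.str (p a)
  p_right_act : ∀ (a : A) (h : H),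
    p (AB.mul a (i ((HB.str ^ (-m)) h))) = HB.counit h • CC.str (p a)
  sigma_mod : ∃ σbar : H →ₗ[K] H →ₗ[K] A,
    IsLeftSigmaHomModule HB AB.mul AB.str.toLinearMap σbar
        (AB.mul ∘ₗ i ∘ₗ (HB.str ^ (-m)).toLinearMap)
      ∧ IsRightSigmaHomModule HB AB.mul AB.str.toLinearMap σbar
        (AB.mul.compl₂ (i ∘ₗ (HB.str ^ (-m)).toLinearMap))
  sub_l : ∀ c : C, ∃ y : H ⊗[K] C,
    TensorProduct.map ((HB.str ^ (-m)).toLinearMap ∘ₗ π) (LinearMap.id : A →ₗ[K] A)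
        (AB.comul (j c))
      = TensorProduct.map (LinearMap.id : H →ₗ[K] H) j y
  sub_r : ∀ c : C, ∃ z : C ⊗[K] H,
    TensorProduct.map (LinearMap.id : A →ₗ[K] A) ((HB.str ^ (-m)).toLinearMap ∘ₗ π)
        (AB.comul (j c))
      = TensorProduct.map j (LinearMap.id : H →ₗ[K] H) z
  p_col : ∀ c : C,
    TensorProduct.map (LinearMap.id : H →ₗ[K] H) p
        (TensorProduct.map ((HB.str ^ (-m)).toLinearMap ∘ₗ π) (LinearMap.id : A →ₗ[K] A)
          (AB.comul (j c)))
      = coact c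
  p_cor : ∀ c : C,
    TensorProduct.map p (LinearMap.id : H →ₗ[K] H)
        (TensorProduct.map (LinearMap.id : A →ₗ[K] A) ((HB.str ^ (-m)).toLinearMap ∘ₗ π)
          (AB.comul (j c)))
      = CC.str.symm c ⊗ₜ[K] HB.one
  split : ∀ a : A,
    TensorProduct.lift AB.mul (TensorProduct.map (j ∘ₗ p) (i ∘ₗ π) (AB.comul a)) = a

/-- The map `f : C ♯ H → A`, `c ⊗ h ↦ γ⁻¹(j(c)i(h))`. -/
def admF (AB : HomBialgebraStr K A) (j : C →ₗ[K] A) (i : H →ₗ[K] A) :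
    C ⊗[K] H →ₗ[K] A :=
  AB.str.symm.toLinearMap ∘ₗ TensorProduct.lift ((AB.mul ∘ₗ j).compl₂ i)

/-- The map `g : A → C ♯ H`, `a ↦ β(p(a₁)) ⊗ α(π(a₂))`. -/
def admG (HB : HomBialgebraStr K H) (CC : HomCoalgebraStr K C)
    (AB : HomBialgebraStr K A) (p : A →ₗ[K] C) (π : A →ₗ[K] H) :
    A →ₗ[K] C ⊗[K] H :=
  TensorProduct.map (CC.str.toLinearMap ∘ₗ p) (HB.str.toLinearMap ∘ₗ π) ∘ₗ AB.comul

end Defs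

/-!
The unit law `(1 ♯ 1)(b ♯ g) = β(b) ♯ α(g)` of the crossed product forces `σ(1, h) = ε(h) 1` and
`1 · b = β(b)`, hence `(a ♯ 1)(b ♯ 1) = ab ♯ 1` and `(b ♯ 1)(1 ♯ g) = β(b) ♯ α(g)`.
Since the product and the coproduct share the structure map `β ⊗ α`, and the componentwise
product on `(A ♯ H) ⊗ (A ♯ H)` is again Hom-associative, multiplicativity of `Δ` on `(x, z)` and
`(z, w)` makes multiplicativity on `(xz, α(w))` and on `(α(x), zw)` equivalent. Writing
`a ♯ h = (β⁻¹(a) ♯ 1)(1 ♯ α⁻¹(h))`, four such transfers lead from the four special cases to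
arbitrary simple tensors.
-/

namespace LinearEquiv

variable {R M W : Type*} [Semiring R] [AddCommMonoid M] [Module R M]

theorem zpow_apply_eq_self {e : M ≃ₗ[R] M} {x : M} (hx : e x = x) (n : ℤ) : (e ^ n) x = x :=
  (MulAction.stabilizer (M ≃ₗ[R] M) x).zpow_mem (x := e) hx n

theorem apply_zpow_apply {e : M ≃ₗ[R] M} {f : M → W} (hf : ∀ y, f (e y) = f y) (n : ℤ)
    (y : M) : f ((e ^ n) y) = f y := by
  induction n using Int.induction_on generalizing y with
  | zero => rfl
  | succ n ih => rw [zpow_add_one, mul_apply, ih, hf]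
  | pred n ih => rw [zpow_sub_one, mul_apply, ih, coe_inv, ← hf (e.symm y), apply_symm_apply]

end LinearEquiv

section HomAlgebra

variable {K N : Type*} [Field K] [AddCommGroup N] [Module K N]

@[simp]
theorem tensorSquareMul_tmul (mul : N →ₗ[K] N →ₗ[K] N) (p q r s : N) :
    tensorSquareMul mul (p ⊗ₜ[K] q) (r ⊗ₜ[K] s) = mul p r ⊗ₜ[K] mul q s := by
  simp [tensorSquareMul]

theorem tensorSquareMul_hom_assoc (M : HomAlgebraStr K N) (X Y Z : N ⊗[K] N) :
    tensorSquareMul M.mul (map M.str.toLinearMap M.str.toLinearMap X)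
        (tensorSquareMul M.mul Y Z)
      = tensorSquareMul M.mul (tensorSquareMul M.mul X Y)
          (map M.str.toLinearMap M.str.toLinearMap Z) := by
  induction X using TensorProduct.induction_on with
  | zero => simp
  | add X X' hX hX' => simp only [map_add, LinearMap.add_apply, hX, hX']
  | tmul x x' =>
    induction Y using TensorProduct.induction_on with
    | zero => simp
    | add Y Y' hY hY' => simp only [map_add, LinearMap.add_apply, hY, hY']
    | tmul y y' =>
      induction Z using TensorProduct.induction_on with
      | zero => simp
      | add Z Z' hZ hZ' => simp only [map_add, hZ, hZ']
      | tmul z z' =>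
        simp only [map_tmul, LinearEquiv.coe_coe, tensorSquareMul_tmul, M.hom_assoc]

def ComulMultiplicativeAt (M : HomAlgebraStr K N) (D : HomCoalgebraStr K N) (x y : N) : Prop :=
  D.comul (M.mul x y) = tensorSquareMul M.mul (D.comul x) (D.comul y)

variable {M : HomAlgebraStr K N} {D : HomCoalgebraStr K N}

theorem comulMultiplicativeAt_mul_str_iff (hMD : M.str = D.str) {x z w : N}
    (hxz : ComulMultiplicativeAt M D x z) (hzw : ComulMultiplicativeAt M D z w) :
    ComulMultiplicativeAt M D (M.mul x z) (M.str w)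
      ↔ ComulMultiplicativeAt M D (M.str x) (M.mul z w) := by
  have comul_str (u : N) :
      D.comul (M.str u) = map M.str.toLinearMap M.str.toLinearMap (D.comul u) :=
    hMD ▸ D.comul_str u
  unfold ComulMultiplicativeAt at *
  rw [M.hom_assoc, comul_str, comul_str, hxz, hzw, tensorSquareMul_hom_assoc]

end HomAlgebra

section SimpleTensors

variable {K H A : Type*} [Field K] [AddCommGroup H] [Module K H] [AddCommGroup A] [Module K A]
  {M : HomAlgebraStr K (A ⊗[K] H)} {D : HomCoalgebraStr K (A ⊗[K] H)}

theorem ComulMultiplicativeAt.of_forall_tmul_right {x : A ⊗[K] H}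
    (h : ∀ b g, ComulMultiplicativeAt M D x (b ⊗ₜ g)) (y : A ⊗[K] H) :
    ComulMultiplicativeAt M D x y := by
  induction y using TensorProduct.induction_on with
  | zero => simp [ComulMultiplicativeAt]
  | tmul b g => exact h b g
  | add y y' hy hy' => unfold ComulMultiplicativeAt at *; simp only [map_add, hy, hy']

theorem ComulMultiplicativeAt.of_forall_tmul_left {y : A ⊗[K] H}
    (h : ∀ a l, ComulMultiplicativeAt M D (a ⊗ₜ l) y) (x : A ⊗[K] H) :
    ComulMultiplicativeAt M D x y := by
  induction x using TensorProduct.induction_on with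
  | zero => simp [ComulMultiplicativeAt]
  | tmul a l => exact h a l
  | add x x' hx hx' =>
    unfold ComulMultiplicativeAt at *; simp only [map_add, LinearMap.add_apply, hx, hx']

theorem rid_map_map_of_comp_eq {c : H →ₗ[K] K} {L : H →ₗ[K] A} {f : H →ₗ[K] H}
    (hf : ∀ y, c (f y) = c y) (x : H ⊗[K] H) :
    TensorProduct.rid K A (map LinearMap.id c (map L f x))
      = L (TensorProduct.rid K H (map LinearMap.id c x)) := by
  induction x using TensorProduct.induction_on with
  | zero => simp
  | add u v hu hv => simp only [map_add, hu, hv]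
  | tmul y z => simp [hf]

theorem map_toSpanSingleton_comp (c : H →ₗ[K] K) (f : H →ₗ[K] H) (v : A) (x : H ⊗[K] H) :
    map (LinearMap.toSpanSingleton K A v ∘ₗ c) f x
      = v ⊗ₜ f (TensorProduct.lid K H (map c LinearMap.id x)) := by
  induction x using TensorProduct.induction_on with
  | zero => simp
  | add u w hu hw => simp only [map_add, hu, hw, tmul_add]
  | tmul y z => simp [TensorProduct.smul_tmul]

end SimpleTensors

section Factorization

variable {K H A : Type*} [Field K] [AddCommGroup H] [Module K H] [AddCommGroup A] [Module K A]

structure IsFactorizedProduct (AA : HomAlgebraStr K A) (HH : HomAlgebraStr K H)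
    (M : HomAlgebraStr K (A ⊗[K] H)) : Prop where
  str_eq : M.str = TensorProduct.congr AA.str HH.str
  tmul_one_mul_tmul_one : ∀ a b : A,
    M.mul (a ⊗ₜ[K] HH.one) (b ⊗ₜ[K] HH.one) = AA.mul a b ⊗ₜ[K] HH.one
  tmul_one_mul_one_tmul : ∀ (b : A) (g : H),
    M.mul (b ⊗ₜ[K] HH.one) (AA.one ⊗ₜ[K] g) = AA.str b ⊗ₜ[K] HH.str g

end Factorization

namespace IsFactorizedProduct

variable {K H A : Type*} [Field K] [AddCommGroup H] [Module K H] [AddCommGroup A] [Module K A]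
  {AA : HomAlgebraStr K A} {HH : HomAlgebraStr K H} {M : HomAlgebraStr K (A ⊗[K] H)}
  {D : HomCoalgebraStr K (A ⊗[K] H)}

theorem str_symm_tmul_one (hF : IsFactorizedProduct AA HH M) (a : A) :
    M.str (AA.str.symm a ⊗ₜ[K] HH.one) = a ⊗ₜ[K] HH.one := by
  rw [hF.str_eq, congr_tmul, LinearEquiv.apply_symm_apply, HH.str_one]

theorem str_one_tmul_symm (hF : IsFactorizedProduct AA HH M) (g : H) :
    M.str (AA.one ⊗ₜ[K] HH.str.symm g) = AA.one ⊗ₜ[K] g := by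
  rw [hF.str_eq, congr_tmul, LinearEquiv.apply_symm_apply, AA.str_one]

theorem str_symm_tmul_str_symm (hF : IsFactorizedProduct AA HH M) (a : A) (h : H) :
    M.str (AA.str.symm a ⊗ₜ[K] HH.str.symm h) = a ⊗ₜ[K] h := by
  rw [hF.str_eq, congr_tmul, LinearEquiv.apply_symm_apply, LinearEquiv.apply_symm_apply]

theorem symm_tmul_one_mul_one_tmul_symm (hF : IsFactorizedProduct AA HH M) (b : A) (g : H) :
    M.mul (AA.str.symm b ⊗ₜ[K] HH.one) (AA.one ⊗ₜ[K] HH.str.symm g) = b ⊗ₜ[K] g := by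
  rw [hF.tmul_one_mul_one_tmul, LinearEquiv.apply_symm_apply, LinearEquiv.apply_symm_apply]

theorem comulMultiplicativeAt_tmul_one_left (hF : IsFactorizedProduct AA HH M)
    (hMD : M.str = D.str)
    (h1 : ∀ a b : A, ComulMultiplicativeAt M D (a ⊗ₜ[K] HH.one) (b ⊗ₜ[K] HH.one))
    (h2 : ∀ (a : A) (g : H), ComulMultiplicativeAt M D (a ⊗ₜ[K] HH.one) (AA.one ⊗ₜ[K] g))
    (a : A) (y : A ⊗[K] H) : ComulMultiplicativeAt M D (a ⊗ₜ[K] HH.one) y := by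
  refine ComulMultiplicativeAt.of_forall_tmul_right (fun c l => ?_) y
  have h := (comulMultiplicativeAt_mul_str_iff hMD (h1 (AA.str.symm a) (AA.str.symm c))
    (h2 (AA.str.symm c) (HH.str.symm l))).1
    (by rw [hF.tmul_one_mul_tmul_one, hF.str_one_tmul_symm]; exact h2 _ _)
  rwa [hF.str_symm_tmul_one, hF.symm_tmul_one_mul_one_tmul_symm] at h

theorem comulMultiplicativeAt_one_tmul_right (hF : IsFactorizedProduct AA HH M)
    (hMD : M.str = D.str)
    (h1 : ∀ a b : A, ComulMultiplicativeAt M D (a ⊗ₜ[K] HH.one) (b ⊗ₜ[K] HH.one))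
    (h2 : ∀ (a : A) (g : H), ComulMultiplicativeAt M D (a ⊗ₜ[K] HH.one) (AA.one ⊗ₜ[K] g))
    (h4 : ∀ h g : H, ComulMultiplicativeAt M D (AA.one ⊗ₜ[K] h) (AA.one ⊗ₜ[K] g))
    (x : A ⊗[K] H) (g : H) : ComulMultiplicativeAt M D x (AA.one ⊗ₜ[K] g) := by
  refine ComulMultiplicativeAt.of_forall_tmul_left (fun c l => ?_) x
  have h := (comulMultiplicativeAt_mul_str_iff hMD (h2 (AA.str.symm c) (HH.str.symm l))
    (h4 (HH.str.symm l) (HH.str.symm g))).2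
    (by rw [hF.str_symm_tmul_one]; exact hF.comulMultiplicativeAt_tmul_one_left hMD h1 h2 _ _)
  rwa [hF.symm_tmul_one_mul_one_tmul_symm, hF.str_one_tmul_symm] at h

theorem comulMultiplicativeAt_tmul_one_right (hF : IsFactorizedProduct AA HH M)
    (hMD : M.str = D.str)
    (h1 : ∀ a b : A, ComulMultiplicativeAt M D (a ⊗ₜ[K] HH.one) (b ⊗ₜ[K] HH.one))
    (h2 : ∀ (a : A) (g : H), ComulMultiplicativeAt M D (a ⊗ₜ[K] HH.one) (AA.one ⊗ₜ[K] g))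
    (h3 : ∀ (h : H) (b : A), ComulMultiplicativeAt M D (AA.one ⊗ₜ[K] h) (b ⊗ₜ[K] HH.one))
    (c : A) (l : H) (b : A) : ComulMultiplicativeAt M D (c ⊗ₜ[K] l) (b ⊗ₜ[K] HH.one) := by
  have h := (comulMultiplicativeAt_mul_str_iff hMD (h2 (AA.str.symm c) (HH.str.symm l))
    (h3 (HH.str.symm l) (AA.str.symm b))).2
    (by rw [hF.str_symm_tmul_one]; exact hF.comulMultiplicativeAt_tmul_one_left hMD h1 h2 _ _)
  rwa [hF.symm_tmul_one_mul_one_tmul_symm, hF.str_symm_tmul_one] at h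

theorem comulMultiplicativeAt_tmul (hF : IsFactorizedProduct AA HH M) (hMD : M.str = D.str)
    (h1 : ∀ a b : A, ComulMultiplicativeAt M D (a ⊗ₜ[K] HH.one) (b ⊗ₜ[K] HH.one))
    (h2 : ∀ (a : A) (g : H), ComulMultiplicativeAt M D (a ⊗ₜ[K] HH.one) (AA.one ⊗ₜ[K] g))
    (h3 : ∀ (h : H) (b : A), ComulMultiplicativeAt M D (AA.one ⊗ₜ[K] h) (b ⊗ₜ[K] HH.one))
    (h4 : ∀ h g : H, ComulMultiplicativeAt M D (AA.one ⊗ₜ[K] h) (AA.one ⊗ₜ[K] g))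
    (a : A) (h : H) (b : A) (g : H) : ComulMultiplicativeAt M D (a ⊗ₜ[K] h) (b ⊗ₜ[K] g) := by
  have key := (comulMultiplicativeAt_mul_str_iff hMD
    (hF.comulMultiplicativeAt_tmul_one_right hMD h1 h2 h3 (AA.str.symm a) (HH.str.symm h)
      (AA.str.symm b)) (h2 (AA.str.symm b) (HH.str.symm g))).1
    (by rw [hF.str_one_tmul_symm]; exact hF.comulMultiplicativeAt_one_tmul_right hMD h1 h2 h4 _ _)
  rwa [hF.str_symm_tmul_str_symm, hF.symm_tmul_one_mul_one_tmul_symm] at key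

end IsFactorizedProduct

section CrossedProduct

variable {K H A : Type*} [Field K] [AddCommGroup H] [Module K H] [AddCommGroup A] [Module K A]

theorem cpMulElem_one_left (HB : HomBialgebraStr K H) (AA : HomAlgebraStr K A)
    (act : H →ₗ[K] A →ₗ[K] A) (σ : H →ₗ[K] H →ₗ[K] A) (m k : ℤ) (a b : A) (g : H) :
    cpMulElem HB AA act σ m k a HB.one b g
      = map (AA.mul a ∘ₗ AA.mul (act HB.one ((AA.str ^ (-2 : ℤ)) b)) ∘ₗ σ HB.one
            ∘ₗ (HB.str ^ k).toLinearMap)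
          (HB.str.toLinearMap ∘ₗ HB.str.toLinearMap) (HB.comul g) := by
  unfold cpMulElem
  rw [HB.comul_one]
  induction HB.comul g using TensorProduct.induction_on with
  | zero => simp
  | add u v hu hv => simp only [tmul_add, map_add, hu, hv]
  | tmul g₁ g₂ =>
    simp only [tensorTensorTensorComm_tmul, map_tmul, LinearMap.comp_apply, LinearEquiv.coe_coe,
      assoc_tmul, lift.tmul, LinearMap.flip_apply, LinearMap.id_coe, id_eq, HB.comul_one,
      LinearEquiv.zpow_apply_eq_self HB.str_one, HB.one_mul]

variable {HB : HomBialgebraStr K H} {AA : HomAlgebraStr K A} {act : H →ₗ[K] A →ₗ[K] A}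
  {σ : H →ₗ[K] H →ₗ[K] A} {m k : ℤ} {M : HomAlgebraStr K (A ⊗[K] H)}

theorem str_mul_act_sigma_one_left
    (hMmul : ∀ a h b g, M.mul (a ⊗ₜ[K] h) (b ⊗ₜ[K] g) = cpMulElem HB AA act σ m k a h b g)
    (hMone : M.one = AA.one ⊗ₜ[K] HB.one) (hMstr : M.str = TensorProduct.congr AA.str HB.str)
    (b : A) (g : H) :
    AA.str (AA.mul (act HB.one ((AA.str ^ (-2 : ℤ)) b))
        (σ HB.one ((HB.str ^ k) (HB.str.symm g)))) = HB.counit g • AA.str b := by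
  have unit_law := M.one_mul (b ⊗ₜ g)
  rw [hMone, hMmul, cpMulElem_one_left, hMstr, congr_tmul] at unit_law
  have := congrArg (fun x => TensorProduct.rid K A (map LinearMap.id HB.counit x)) unit_law
  rw [rid_map_map_of_comp_eq (fun y => by simp [HB.counit_str]), HB.counit_comul_right] at this
  simpa [HB.counit_str, AA.one_mul] using this

theorem sigma_one_left_eq_counit (hact : IsWeakModuleAlgebra HB AA act)
    (hMmul : ∀ a h b g, M.mul (a ⊗ₜ[K] h) (b ⊗ₜ[K] g) = cpMulElem HB AA act σ m k a h b g)
    (hMone : M.one = AA.one ⊗ₜ[K] HB.one) (hMstr : M.str = TensorProduct.congr AA.str HB.str)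
    (y : H) : σ HB.one y = HB.counit y • AA.one := by
  have h := str_mul_act_sigma_one_left hMmul hMone hMstr AA.one (HB.str ((HB.str ^ k).symm y))
  rw [LinearEquiv.zpow_apply_eq_self AA.str_one, hact.act_one, HB.counit_one, one_smul,
    AA.one_mul, LinearEquiv.symm_apply_apply, LinearEquiv.apply_symm_apply, AA.str_one,
    HB.counit_str] at h
  have counit_symm : HB.counit ((HB.str ^ k).symm y) = HB.counit y := by
    simpa using (LinearEquiv.apply_zpow_apply HB.counit_str k ((HB.str ^ k).symm y)).symm
  refine AA.str.injective (AA.str.injective ?_)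
  rw [h, counit_symm, map_smul, map_smul, AA.str_one, AA.str_one]

theorem act_one_eq_str (hact : IsWeakModuleAlgebra HB AA act)
    (hMmul : ∀ a h b g, M.mul (a ⊗ₜ[K] h) (b ⊗ₜ[K] g) = cpMulElem HB AA act σ m k a h b g)
    (hMone : M.one = AA.one ⊗ₜ[K] HB.one) (hMstr : M.str = TensorProduct.congr AA.str HB.str)
    (b : A) : act HB.one b = AA.str b := by
  have h := str_mul_act_sigma_one_left hMmul hMone hMstr ((AA.str ^ (2 : ℤ)) b) HB.one
  rw [← LinearEquiv.mul_apply, ← zpow_add, neg_add_cancel, zpow_zero, LinearEquiv.coe_one, id,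
    sigma_one_left_eq_counit hact hMmul hMone hMstr, HB.str.symm_apply_eq.2 HB.str_one.symm,
    LinearEquiv.zpow_apply_eq_self HB.str_one, HB.counit_one, one_smul, one_smul, AA.mul_one,
    zpow_two, LinearEquiv.mul_apply] at h
  exact AA.str.injective (AA.str.injective h)

theorem isFactorizedProduct_of_cpMulElem (hact : IsWeakModuleAlgebra HB AA act)
    (hMmul : ∀ a h b g, M.mul (a ⊗ₜ[K] h) (b ⊗ₜ[K] g) = cpMulElem HB AA act σ m k a h b g)
    (hMone : M.one = AA.one ⊗ₜ[K] HB.one) (hMstr : M.str = TensorProduct.congr AA.str HB.str) :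
    IsFactorizedProduct AA HB.toHomAlgebraStr M where
  str_eq := hMstr
  tmul_one_mul_tmul_one a b := by
    rw [hMmul, cpMulElem_one_left, HB.comul_one, map_tmul]
    simp only [LinearMap.comp_apply, LinearEquiv.coe_coe]
    rw [LinearEquiv.zpow_apply_eq_self HB.str_one,
      sigma_one_left_eq_counit hact hMmul hMone hMstr, HB.counit_one, one_smul, AA.mul_one,
      act_one_eq_str hact hMmul hMone hMstr, HB.str_one, HB.str_one,
      show (-2 : ℤ) = -1 + -1 by norm_num, zpow_add, zpow_neg_one, LinearEquiv.mul_apply, LinearEquiv.coe_inv, LinearEquiv.apply_symm_apply,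
      LinearEquiv.apply_symm_apply]
  tmul_one_mul_one_tmul b g := by
    have scalar : AA.mul b ∘ₗ AA.mul (act HB.one ((AA.str ^ (-2 : ℤ)) AA.one)) ∘ₗ σ HB.one
        ∘ₗ (HB.str ^ k).toLinearMap = LinearMap.toSpanSingleton K A (AA.str b) ∘ₗ HB.counit := by
      ext y
      simp only [LinearMap.comp_apply, LinearEquiv.coe_coe, LinearMap.toSpanSingleton_apply,
        LinearEquiv.zpow_apply_eq_self AA.str_one, act_one_eq_str hact hMmul hMone hMstr,
        sigma_one_left_eq_counit hact hMmul hMone hMstr,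
        LinearEquiv.apply_zpow_apply HB.counit_str, map_smul, AA.str_one, AA.mul_one]
    rw [hMmul, cpMulElem_one_left, scalar, map_toSpanSingleton_comp, HB.counit_comul_left,
      LinearMap.comp_apply, LinearEquiv.coe_coe, LinearEquiv.apply_symm_apply]

end CrossedProduct

theorem comul_multiplicative_of_special_cases_general
    {K H A : Type*} [Field K] [AddCommGroup H] [Module K H] [AddCommGroup A] [Module K A]
    (HB : HomBialgebraStr K H) (AA : HomAlgebraStr K A) (AC : HomCoalgebraStr K A)
    (hstr : AA.str = AC.str)
    (act : H →ₗ[K] A →ₗ[K] A) (hact : IsWeakModuleAlgebra HB AA act)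
    (σ : H →ₗ[K] H →ₗ[K] A) (m k : ℤ)
    (M : HomAlgebraStr K (A ⊗[K] H))
    (hMmul : ∀ (a : A) (h : H) (b : A) (g : H),
      M.mul (a ⊗ₜ[K] h) (b ⊗ₜ[K] g) = cpMulElem HB AA act σ m k a h b g)
    (hMone : M.one = AA.one ⊗ₜ[K] HB.one)
    (hMstr : M.str = TensorProduct.congr AA.str HB.str)
    (D : HomCoalgebraStr K (A ⊗[K] H))
    (hDstr : D.str = TensorProduct.congr AC.str HB.str)
    (h1 : ∀ a b : A,
      D.comul (M.mul (a ⊗ₜ[K] HB.one) (b ⊗ₜ[K] HB.one))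
        = tensorSquareMul M.mul (D.comul (a ⊗ₜ[K] HB.one)) (D.comul (b ⊗ₜ[K] HB.one)))
    (h2 : ∀ (a : A) (g : H),
      D.comul (M.mul (a ⊗ₜ[K] HB.one) (AA.one ⊗ₜ[K] g))
        = tensorSquareMul M.mul (D.comul (a ⊗ₜ[K] HB.one)) (D.comul (AA.one ⊗ₜ[K] g)))
    (h3 : ∀ (h : H) (b : A),
      D.comul (M.mul (AA.one ⊗ₜ[K] h) (b ⊗ₜ[K] HB.one))
        = tensorSquareMul M.mul (D.comul (AA.one ⊗ₜ[K] h)) (D.comul (b ⊗ₜ[K] HB.one)))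
    (h4 : ∀ h g : H,
      D.comul (M.mul (AA.one ⊗ₜ[K] h) (AA.one ⊗ₜ[K] g))
        = tensorSquareMul M.mul (D.comul (AA.one ⊗ₜ[K] h)) (D.comul (AA.one ⊗ₜ[K] g))) :
    ∀ (a : A) (h : H) (b : A) (g : H),
      D.comul (M.mul (a ⊗ₜ[K] h) (b ⊗ₜ[K] g))
        = tensorSquareMul M.mul (D.comul (a ⊗ₜ[K] h)) (D.comul (b ⊗ₜ[K] g)) := by
  have hF := isFactorizedProduct_of_cpMulElem hact hMmul hMone hMstr
  have hMD : M.str = D.str := by rw [hMstr, hDstr, hstr]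
  exact hF.comulMultiplicativeAt_tmul hMD h1 h2 h3 h4

/-- The reduction step in the proof of Theorem 3.3: if `Δ` is multiplicative on the four
special kinds of pairs, then it is multiplicative on all pairs of simple tensors. -/
theorem comul_multiplicative_of_special_cases
    {K H A : Type*} [Field K] [AddCommGroup H] [Module K H] [AddCommGroup A] [Module K A]
    (HB : HomBialgebraStr K H) (AA : HomAlgebraStr K A) (AC : HomCoalgebraStr K A)
    (hstr : AA.str = AC.str)
    (act : H →ₗ[K] A →ₗ[K] A) (hact : IsWeakModuleAlgebra HB AA act)
    (coact : A →ₗ[K] H ⊗[K] A) (hcc : IsComoduleCoalgebra HB AC coact)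
    (σ : H →ₗ[K] H →ₗ[K] A) (m k : ℤ)
    (M : HomAlgebraStr K (A ⊗[K] H))
    (hMmul : ∀ (a : A) (h : H) (b : A) (g : H),
      M.mul (a ⊗ₜ[K] h) (b ⊗ₜ[K] g) = cpMulElem HB AA act σ m k a h b g)
    (hMone : M.one = AA.one ⊗ₜ[K] HB.one)
    (hMstr : M.str = TensorProduct.congr AA.str HB.str)
    (hcoc : IsTwistedCocycle HB AA AC coact σ m k)
    (D : HomCoalgebraStr K (A ⊗[K] H))
    (hDcomul : ∀ (a : A) (h : H), D.comul (a ⊗ₜ[K] h) = scComulElem HB AC coact m a h)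
    (hDcounit : ∀ (a : A) (h : H), D.counit (a ⊗ₜ[K] h) = AC.counit a * HB.counit h)
    (hDstr : D.str = TensorProduct.congr AC.str HB.str)
    (h1 : ∀ a b : A,
      D.comul (M.mul (a ⊗ₜ[K] HB.one) (b ⊗ₜ[K] HB.one))
        = tensorSquareMul M.mul (D.comul (a ⊗ₜ[K] HB.one)) (D.comul (b ⊗ₜ[K] HB.one)))
    (h2 : ∀ (a : A) (g : H),
      D.comul (M.mul (a ⊗ₜ[K] HB.one) (AA.one ⊗ₜ[K] g))
        = tensorSquareMul M.mul (D.comul (a ⊗ₜ[K] HB.one)) (D.comul (AA.one ⊗ₜ[K] g)))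
    (h3 : ∀ (h : H) (b : A),
      D.comul (M.mul (AA.one ⊗ₜ[K] h) (b ⊗ₜ[K] HB.one))
        = tensorSquareMul M.mul (D.comul (AA.one ⊗ₜ[K] h)) (D.comul (b ⊗ₜ[K] HB.one)))
    (h4 : ∀ h g : H,
      D.comul (M.mul (AA.one ⊗ₜ[K] h) (AA.one ⊗ₜ[K] g))
        = tensorSquareMul M.mul (D.comul (AA.one ⊗ₜ[K] h)) (D.comul (AA.one ⊗ₜ[K] g))) :
    ∀ (a : A) (h : H) (b : A) (g : H),
      D.comul (M.mul (a ⊗ₜ[K] h) (b ⊗ₜ[K] g))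
        = tensorSquareMul M.mul (D.comul (a ⊗ₜ[K] h)) (D.comul (b ⊗ₜ[K] g)) :=
  comul_multiplicative_of_special_cases_general HB AA AC hstr act hact σ m k M hMmul hMone hMstr D
    hDstr h1 h2 h3 h4
end
end

section
/- Let (A ♯_σ^× H, β ⊗ α) be a Radford [(m,k),m]-biproduct monoidal Hom-bialgebra. Suppose (H, α) is a σ-monoidal Hom-Hopf algebra with σ-antipode S_H, and S_A: A → A is a convolution inverse of id_A (i.e. S_A(a₁)a₂ = ε(a)1_A = a₁S_A(a₂)) with β∘S_A = S_A∘β. Then (A ♯_σ^× H, β ⊗ α) is a monoidal Hom-Hopf algebra with antipode S(a ⊗ h) = (1_A ⊗ S_H(α^{m−1}(a₍₋₁₎)α⁻²(h)))·(S_A(a₍₀₎) ⊗ 1_H). -/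
open TensorProduct

noncomputable section

/-!
The identity of `A ⊗ H` is the Hom-convolution product `F * G` of the projections
`F(a ⊗ h) = ε(h) a ⊗ 1` and `G(a ⊗ h) = ε(a) 1 ⊗ h`. On `A ⊗ 1` the biproduct multiplication
is that of `A`, so `F' = S_A ⊗ ε1` is a convolution inverse of `F`; on `1 ⊗ H` it is the
`σ`-twisted multiplication of `H`, so the `σ`-antipode makes `G' = ε1 ⊗ S_H` a convolution
inverse of `G`. Hom-convolution is associative on maps commuting with the structure map, hence
`G' * F'` is a convolution inverse of the identity, i.e. an antipode, and evaluating `G' * F'`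
on `a ⊗ h` gives the stated formula.
-/

section ZPow

variable {R M N : Type*} [CommSemiring R] [AddCommMonoid M] [Module R M]
  [AddCommMonoid N] [Module R N]

theorem LinearEquiv.zpow_apply_zpow_apply (e : M ≃ₗ[R] M) (p q : ℤ) (x : M) :
    (e ^ p) ((e ^ q) x) = (e ^ (p + q)) x := by
  rw [zpow_add]; rfl

theorem LinearEquiv.zpow_neg_one_apply (e : M ≃ₗ[R] M) (x : M) :
    (e ^ (-1 : ℤ)) x = e.symm x := by
  rw [zpow_neg_one]; rfl

theorem LinearMap.apply_zpow_apply_of_comm {f : M →ₗ[R] N} {eM : M ≃ₗ[R] M}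
    {eN : N ≃ₗ[R] N} (h : ∀ x, f (eM x) = eN (f x)) (n : ℤ) (x : M) :
    f ((eM ^ n) x) = (eN ^ n) (f x) := by
  have h_symm : ∀ x, f (eM.symm x) = eN.symm (f x) := fun x => by
    rw [← eN.symm_apply_apply (f (eM.symm x)), ← h, eM.apply_symm_apply]
  induction n using Int.induction_on generalizing x with
  | zero => rfl
  | succ i ih =>
    rw [zpow_add_one, zpow_add_one, LinearEquiv.mul_apply, LinearEquiv.mul_apply, ih, h]
  | pred i ih =>
    rw [zpow_sub_one, zpow_sub_one, LinearEquiv.mul_apply, LinearEquiv.mul_apply, ih]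
    exact congrArg _ (h_symm x)

theorem LinearEquiv.zpow_apply_eq_self_s6 {e : M ≃ₗ[R] M} {x : M} (h : e x = x) (n : ℤ) :
    (e ^ n) x = x := by
  simpa using ((LinearMap.toSpanSingleton R M x).apply_zpow_apply_of_comm
    (eM := 1) (eN := e) (fun c => by simp [h]) n 1).symm

theorem LinearMap.apply_zpow_apply_of_invariant {f : M →ₗ[R] R} {e : M ≃ₗ[R] M}
    (h : ∀ x, f (e x) = f x) (n : ℤ) (x : M) : f ((e ^ n) x) = f x := by
  simpa using f.apply_zpow_apply_of_comm (eN := 1) h n x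

end ZPow

namespace HomAlgebraStr

variable {K A : Type*} [Field K] [AddCommGroup A] [Module K A] (AA : HomAlgebraStr K A)

theorem str_zpow_one (n : ℤ) : (AA.str ^ n) AA.one = AA.one :=
  LinearEquiv.zpow_apply_eq_self_s6 AA.str_one n

theorem str_zpow_mul (n : ℤ) (a b : A) :
    (AA.str ^ n) (AA.mul a b) = AA.mul ((AA.str ^ n) a) ((AA.str ^ n) b) := by
  have h : ∀ y, TensorProduct.lift AA.mul (TensorProduct.congr AA.str AA.str y)
      = AA.str (TensorProduct.lift AA.mul y) := fun y => by
    induction y using TensorProduct.induction_on with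
    | zero => simp
    | tmul a b => simp [AA.str_mul]
    | add a b ha hb => simp [ha, hb]
  simpa using ((TensorProduct.lift AA.mul).apply_zpow_apply_of_comm h n (a ⊗ₜ b)).symm

end HomAlgebraStr

namespace HomCoalgebraStr

variable {K C : Type*} [Field K] [AddCommGroup C] [Module K C] (CC : HomCoalgebraStr K C)

theorem counit_str_symm (x : C) : CC.counit (CC.str.symm x) = CC.counit x := by
  rw [← CC.counit_str, LinearEquiv.apply_symm_apply]

end HomCoalgebraStr

namespace HomBialgebraStr

open TensorProduct

variable {K N : Type*} [Field K] [AddCommGroup N] [Module K N] (Bb : HomBialgebraStr K N)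

theorem counit_str_zpow (n : ℤ) (x : N) : Bb.counit ((Bb.str ^ n) x) = Bb.counit x :=
  Bb.counit.apply_zpow_apply_of_invariant Bb.counit_str n x

theorem counit_str_symm (x : N) : Bb.counit (Bb.str.symm x) = Bb.counit x := by
  rw [← Bb.counit_str, LinearEquiv.apply_symm_apply]

theorem comul_str_zpow (n : ℤ) (x : N) :
    Bb.comul ((Bb.str ^ n) x)
      = TensorProduct.map (Bb.str ^ n).toLinearMap (Bb.str ^ n).toLinearMap (Bb.comul x) := by
  have := Bb.comul.apply_zpow_apply_of_comm (eN := TensorProduct.congr Bb.str Bb.str)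
    (fun x => by rw [Bb.comul_str]; rfl) n x
  rwa [TensorProduct.congr_zpow] at this

def conv (f g : N →ₗ[K] N) : N →ₗ[K] N := lift Bb.mul ∘ₗ map f g ∘ₗ Bb.comul

def convOne : N →ₗ[K] N := Bb.counit.smulRight Bb.one

def StrCommute (f : N →ₗ[K] N) : Prop := ∀ x, f (Bb.str x) = Bb.str (f x)

def IsConvInverse (f g : N →ₗ[K] N) : Prop :=
  Bb.conv f g = Bb.convOne ∧ Bb.conv g f = Bb.convOne

theorem conv_apply (f g : N →ₗ[K] N) (x : N) :
    Bb.conv f g x = lift Bb.mul (map f g (Bb.comul x)) := rfl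

theorem convOne_apply (x : N) : Bb.convOne x = Bb.counit x • Bb.one := rfl

theorem strCommute_convOne : Bb.StrCommute Bb.convOne := fun x => by
  simp [convOne_apply, Bb.counit_str, Bb.str_one]

variable {Bb}

theorem StrCommute.conv {f g : N →ₗ[K] N} (hf : Bb.StrCommute f) (hg : Bb.StrCommute g) :
    Bb.StrCommute (Bb.conv f g) := fun x => by
  have h : lift Bb.mul ∘ₗ map f g ∘ₗ map Bb.str.toLinearMap Bb.str.toLinearMap
      = Bb.str.toLinearMap ∘ₗ lift Bb.mul ∘ₗ map f g :=
    ext' fun y z => by simp [hf y, hg z, Bb.str_mul]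
  simpa [conv_apply, Bb.comul_str] using LinearMap.congr_fun h (Bb.comul x)

theorem conv_convOne {f : N →ₗ[K] N} (hf : Bb.StrCommute f) : Bb.conv f Bb.convOne = f := by
  have h : lift Bb.mul ∘ₗ map f Bb.convOne
      = f ∘ₗ Bb.str.toLinearMap ∘ₗ (TensorProduct.rid K N).toLinearMap ∘ₗ
          map LinearMap.id Bb.counit :=
    ext' fun y z => by simp [convOne_apply, Bb.mul_one, hf y]
  ext x
  simpa [conv_apply, Bb.counit_comul_right] using LinearMap.congr_fun h (Bb.comul x)

theorem convOne_conv {f : N →ₗ[K] N} (hf : Bb.StrCommute f) : Bb.conv Bb.convOne f = f := by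
  have h : lift Bb.mul ∘ₗ map Bb.convOne f
      = f ∘ₗ Bb.str.toLinearMap ∘ₗ (TensorProduct.lid K N).toLinearMap ∘ₗ
          map Bb.counit LinearMap.id :=
    ext' fun y z => by simp [convOne_apply, Bb.one_mul, hf z]
  ext x
  simpa [conv_apply, Bb.counit_comul_left] using LinearMap.congr_fun h (Bb.comul x)

/-- Hom-coassociativity identifies `(Δ ⊗ id) Δ x` and `(id ⊗ Δ) Δ x` with the same
`Y = (Δ ⊗ α⁻¹) Δ x`, twisted by `id ⊗ α` and `α ⊗ id`; Hom-associativity absorbs the twist. -/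
theorem conv_assoc {f g h : N →ₗ[K] N} (hf : Bb.StrCommute f) (hh : Bb.StrCommute h) :
    Bb.conv (Bb.conv f g) h = Bb.conv f (Bb.conv g h) := by
  have hassoc : lift Bb.mul ∘ₗ map (lift Bb.mul ∘ₗ map f g) h ∘ₗ
        map LinearMap.id Bb.str.toLinearMap
      = lift Bb.mul ∘ₗ map f (lift Bb.mul ∘ₗ map g h) ∘ₗ
          map Bb.str.toLinearMap LinearMap.id ∘ₗ (TensorProduct.assoc K N N N).toLinearMap :=
    ext_threefold fun x y z => by simp [hh z, hf x, Bb.hom_assoc]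
  ext x
  set Y := map Bb.comul Bb.str.symm.toLinearMap (Bb.comul x)
  have hY₁ : map Bb.comul LinearMap.id (Bb.comul x) = map LinearMap.id Bb.str.toLinearMap Y := by
    simp only [Y, map_map, LinearMap.id_comp, LinearEquiv.comp_coe, LinearEquiv.symm_trans_self,
      LinearEquiv.refl_toLinearMap]
  have hY₂ : map LinearMap.id Bb.comul (Bb.comul x)
      = map Bb.str.toLinearMap LinearMap.id (TensorProduct.assoc K N N N Y) := by
    simp only [Y, ← Bb.hom_coassoc, map_map, LinearMap.id_comp, LinearEquiv.comp_coe,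
      LinearEquiv.symm_trans_self, LinearEquiv.refl_toLinearMap]
  have lhs : Bb.conv (Bb.conv f g) h x
      = (lift Bb.mul ∘ₗ map (lift Bb.mul ∘ₗ map f g) h)
          (map Bb.comul LinearMap.id (Bb.comul x)) := by
    rw [LinearMap.comp_apply, map_map, LinearMap.comp_id]; rfl
  have rhs : Bb.conv f (Bb.conv g h) x
      = (lift Bb.mul ∘ₗ map f (lift Bb.mul ∘ₗ map g h))
          (map LinearMap.id Bb.comul (Bb.comul x)) := by
    rw [LinearMap.comp_apply, map_map, LinearMap.comp_id]; rfl
  rw [lhs, rhs, hY₁, hY₂]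
  exact LinearMap.congr_fun hassoc Y

theorem IsConvInverse.conv {f f' g g' : N →ₗ[K] N} (hf : Bb.StrCommute f)
    (hf' : Bb.StrCommute f') (hg : Bb.StrCommute g) (hg' : Bb.StrCommute g')
    (hff' : Bb.IsConvInverse f f') (hgg' : Bb.IsConvInverse g g') :
    Bb.IsConvInverse (Bb.conv f g) (Bb.conv g' f') := by
  constructor
  · rw [conv_assoc hf (hg'.conv hf'), ← conv_assoc hg hf', hgg'.1, convOne_conv hf', hff'.1]
  · rw [conv_assoc hg' (hf.conv hg), ← conv_assoc hf' hg, hff'.2, convOne_conv hg, hgg'.2]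

variable (Bb)

def toHomHopfStr (S : N →ₗ[K] N) (hS : Bb.StrCommute S)
    (hS' : Bb.IsConvInverse LinearMap.id S) : HomHopfStr K N where
  toHomBialgebraStr := Bb
  antipode := S
  antipode_str := hS
  antipode_mul_left h := by
    rw [← LinearMap.compl₂_id (Bb.mul ∘ₗ S), ← lift_comp_map]
    exact LinearMap.congr_fun hS'.2 h
  antipode_mul_right h := by
    rw [← LinearMap.comp_id Bb.mul, ← lift_comp_map]
    exact LinearMap.congr_fun hS'.1 h

end HomBialgebraStr

namespace RadfordBiproduct

open TensorProduct

variable {K H A : Type*} [Field K] [AddCommGroup H] [Module K H] [AddCommGroup A] [Module K A]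

def mapA (HB : HomBialgebraStr K H) (u : A →ₗ[K] A) : A ⊗[K] H →ₗ[K] A ⊗[K] H :=
  map u HB.convOne

def mapH (AA : HomAlgebraStr K A) (AC : HomCoalgebraStr K A) (v : H →ₗ[K] H) :
    A ⊗[K] H →ₗ[K] A ⊗[K] H :=
  map (AC.counit.smulRight AA.one) v

end RadfordBiproduct

namespace IsComoduleCoalgebra

open TensorProduct

variable {K H C : Type*} [Field K] [AddCommGroup H] [Module K H] [AddCommGroup C] [Module K C]
  {HB : HomBialgebraStr K H} {CC : HomCoalgebraStr K C} {coact : C →ₗ[K] H ⊗[K] C}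

theorem coact_str_symm (hcc : IsComoduleCoalgebra HB CC coact) (c : C) :
    coact (CC.str.symm c)
      = map HB.str.symm.toLinearMap CC.str.symm.toLinearMap (coact c) := by
  conv_rhs => rw [← CC.str.apply_symm_apply c, hcc.coact_str, map_map]
  simp

end IsComoduleCoalgebra

namespace IsRadfordBiproduct

open TensorProduct RadfordBiproduct

variable {K H A : Type*} [Field K] [AddCommGroup H] [Module K H] [AddCommGroup A] [Module K A]
  {HB : HomBialgebraStr K H} {AA : HomAlgebraStr K A} {AC : HomCoalgebraStr K A}
  {act : H →ₗ[K] A →ₗ[K] A} {coact : A →ₗ[K] H ⊗[K] A} {σ : H →ₗ[K] H →ₗ[K] A} {m k : ℤ}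
  {B : HomBialgebraStr K (A ⊗[K] H)}

theorem counit_str (hB : IsRadfordBiproduct HB AA AC act coact σ m k B) (a : A) :
    AC.counit (AA.str a) = AC.counit a := by
  simpa [hB.str_def, hB.counit_def, HB.counit_str, HB.counit_one]
    using B.counit_str (a ⊗ₜ HB.one)

theorem mul_tmul_one_tmul_eq_map (hB : IsRadfordBiproduct HB AA AC act coact σ m k B)
    (a b : A) (g : H) :
    B.mul (a ⊗ₜ HB.one) (b ⊗ₜ g)
      = map (AA.mul a ∘ₗ AA.mul (act HB.one ((AA.str ^ (-2 : ℤ)) b)) ∘ₗ σ HB.one ∘ₗ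
          (HB.str ^ k).toLinearMap) (HB.str.toLinearMap ∘ₗ HB.str.toLinearMap) (HB.comul g) := by
  rw [hB.mul_def, cpMulElem, HB.comul_one]
  induction HB.comul g using TensorProduct.induction_on with
  | zero => simp
  | tmul g₁ g₂ => simp [HB.comul_one, HB.str_zpow_one, HB.one_mul]
  | add x y hx hy => simp only [tmul_add, map_add, hx, hy]

theorem rid_map_counit_mul_tmul_one (hB : IsRadfordBiproduct HB AA AC act coact σ m k B)
    (a b : A) (g : H) :
    TensorProduct.rid K A (map LinearMap.id HB.counit (B.mul (a ⊗ₜ HB.one) (b ⊗ₜ g)))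
      = AA.mul a
          (AA.mul (act HB.one ((AA.str ^ (-2 : ℤ)) b)) (σ HB.one ((HB.str ^ (k - 1)) g))) := by
  have h : (TensorProduct.rid K A).toLinearMap ∘ₗ map LinearMap.id HB.counit ∘ₗ
      map (AA.mul a ∘ₗ AA.mul (act HB.one ((AA.str ^ (-2 : ℤ)) b)) ∘ₗ σ HB.one ∘ₗ
        (HB.str ^ k).toLinearMap) (HB.str.toLinearMap ∘ₗ HB.str.toLinearMap)
      = (AA.mul a ∘ₗ AA.mul (act HB.one ((AA.str ^ (-2 : ℤ)) b)) ∘ₗ σ HB.one ∘ₗ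
          (HB.str ^ k).toLinearMap) ∘ₗ (TensorProduct.rid K H).toLinearMap ∘ₗ
            map LinearMap.id HB.counit :=
    ext' fun x y => by simp [HB.counit_str]
  have h' := LinearMap.congr_fun h (HB.comul g)
  simp only [LinearMap.comp_apply, LinearEquiv.coe_coe] at h'
  rw [hB.mul_tmul_one_tmul_eq_map, h', HB.counit_comul_right, ← HB.str.zpow_neg_one_apply,
    HB.str.zpow_apply_zpow_apply, ← sub_eq_add_neg]

theorem sigma_one_apply (hB : IsRadfordBiproduct HB AA AC act coact σ m k B)
    (hact : IsWeakModuleAlgebra HB AA act) (g : H) : σ HB.one g = HB.counit g • AA.one := by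
  have h := hB.rid_map_counit_mul_tmul_one AA.one AA.one ((HB.str ^ (1 - k)) g)
  rw [AA.str_zpow_one, hact.act_one, HB.counit_one, one_smul, ← hB.one_def, B.one_mul,
    hB.str_def, AA.one_mul, AA.one_mul, HB.str.zpow_apply_zpow_apply] at h
  have h' : AA.str (AA.str (σ HB.one g)) = AA.str (AA.str (HB.counit g • AA.one)) := by
    simpa [HB.counit_str, HB.counit_str_zpow, AA.str_one] using h.symm
  exact AA.str.injective (AA.str.injective h')

theorem act_one_apply (hB : IsRadfordBiproduct HB AA AC act coact σ m k B)
    (hact : IsWeakModuleAlgebra HB AA act) (b : A) : act HB.one b = AA.str b := by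
  have h := hB.rid_map_counit_mul_tmul_one AA.one ((AA.str ^ (2 : ℤ)) b) HB.one
  rw [← hB.one_def, B.one_mul, hB.str_def, AA.str.zpow_apply_zpow_apply, HB.str_zpow_one,
    hB.sigma_one_apply hact, HB.counit_one, one_smul, AA.mul_one, AA.one_mul] at h
  have h' : AA.str (act HB.one b) = AA.str (AA.str b) := by
    simpa [HB.counit_str, HB.counit_one, pow_two] using h.symm
  exact AA.str.injective h'

theorem mul_tmul_one_tmul (hB : IsRadfordBiproduct HB AA AC act coact σ m k B)
    (hact : IsWeakModuleAlgebra HB AA act) (a b : A) (g : H) :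
    B.mul (a ⊗ₜ HB.one) (b ⊗ₜ g) = AA.mul a b ⊗ₜ HB.str g := by
  have hP : AA.mul a ∘ₗ AA.mul (act HB.one ((AA.str ^ (-2 : ℤ)) b)) ∘ₗ σ HB.one ∘ₗ
      (HB.str ^ k).toLinearMap = HB.counit.smulRight (AA.mul a b) := by
    ext x
    simp only [Int.reduceNeg, zpow_neg, zpow_ofNat, LinearEquiv.coe_inv, hB.act_one_apply hact,
      LinearMap.coe_comp, LinearEquiv.coe_coe, Function.comp_apply, hB.sigma_one_apply hact,
      HB.counit_str_zpow, map_smul, AA.mul_one, LinearMap.coe_smulRight]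
    rw [← LinearEquiv.mul_apply, ← pow_two, LinearEquiv.apply_symm_apply]
  have hmap : map (HB.counit.smulRight (AA.mul a b)) (HB.str.toLinearMap ∘ₗ HB.str.toLinearMap)
      = TensorProduct.mk K A H (AA.mul a b) ∘ₗ HB.str.toLinearMap ∘ₗ HB.str.toLinearMap ∘ₗ
          (TensorProduct.lid K H).toLinearMap ∘ₗ map HB.counit LinearMap.id :=
    ext' fun x y => by simp [smul_tmul']
  rw [hB.mul_tmul_one_tmul_eq_map, hP, hmap]
  simp [HB.counit_comul_left]

theorem one_tmul_mul_one_tmul (hB : IsRadfordBiproduct HB AA AC act coact σ m k B)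
    (hact : IsWeakModuleAlgebra HB AA act) (w g : H) :
    B.mul (AA.one ⊗ₜ w) (AA.one ⊗ₜ g)
      = map (AA.str.toLinearMap ∘ₗ AA.str.toLinearMap ∘ₗ lift σ ∘ₗ
            map (HB.str ^ k).toLinearMap (HB.str ^ k).toLinearMap)
          (HB.str.toLinearMap ∘ₗ lift HB.mul)
          (tensorTensorTensorComm K H H H H (HB.comul w ⊗ₜ HB.comul g)) := by
  have hP : AA.mul AA.one ∘ₗ lift AA.mul ∘ₗ
      map (act.flip ((AA.str ^ (-2 : ℤ)) AA.one) ∘ₗ (HB.str ^ m).toLinearMap)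
        (lift σ ∘ₗ map (HB.str ^ (k + 1)).toLinearMap (HB.str ^ k).toLinearMap) ∘ₗ
      (TensorProduct.assoc K H H H).toLinearMap
      = AA.str.toLinearMap ∘ₗ AA.str.toLinearMap ∘ₗ lift σ ∘ₗ
          map ((HB.str ^ (k + 1)).toLinearMap ∘ₗ (TensorProduct.lid K H).toLinearMap ∘ₗ
            map HB.counit LinearMap.id) (HB.str ^ k).toLinearMap :=
    ext_threefold fun x y z => by
      simp only [AA.str_zpow_one]
      simp [hact.act_one, HB.counit_str_zpow, AA.one_mul]
  rw [hB.mul_def, cpMulElem, map_map, LinearMap.comp_id]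
  congr 2
  have hε : (TensorProduct.lid K H).toLinearMap ∘ₗ map HB.counit LinearMap.id ∘ₗ HB.comul
      = HB.str.symm.toLinearMap := LinearMap.ext HB.counit_comul_left
  have hk : (HB.str ^ (k + 1)).toLinearMap ∘ₗ HB.str.symm.toLinearMap
      = (HB.str ^ k).toLinearMap := by
    ext x
    rw [LinearMap.comp_apply, LinearEquiv.coe_coe, LinearEquiv.coe_coe,
      ← HB.str.zpow_neg_one_apply, HB.str.zpow_apply_zpow_apply, add_neg_cancel_right]
    rfl
  rw [hP]
  simp only [LinearMap.comp_assoc, ← map_comp, LinearMap.comp_id, hε, hk]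

/-- The `σ`-antipode axioms are the antipode axioms for the subalgebra `1 ⊗ H`, up to
conjugation by `α^k`. -/
theorem lift_mul_map_one_tmul (hB : IsRadfordBiproduct HB AA AC act coact σ m k B)
    (hact : IsWeakModuleAlgebra HB AA act) {u v : H →ₗ[K] H} (hu : HB.StrCommute u)
    (hv : HB.StrCommute v)
    (huv : ∀ h, map (lift σ) (lift HB.mul)
        (tensorTensorTensorComm K H H H H (map (HB.comul ∘ₗ u) (HB.comul ∘ₗ v) (HB.comul h)))
      = HB.counit h • (AA.one ⊗ₜ HB.one)) (h : H) :
    lift B.mul (map (TensorProduct.mk K A H AA.one ∘ₗ u) (TensorProduct.mk K A H AA.one ∘ₗ v)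
      (HB.comul h)) = HB.counit h • (AA.one ⊗ₜ HB.one) := by
  set αk := (HB.str ^ k).toLinearMap
  have hmul : lift B.mul ∘ₗ map (TensorProduct.mk K A H AA.one ∘ₗ u)
      (TensorProduct.mk K A H AA.one ∘ₗ v)
      = map (AA.str.toLinearMap ∘ₗ AA.str.toLinearMap) (HB.str ^ (1 - k)).toLinearMap ∘ₗ
          map (lift σ) (lift HB.mul) ∘ₗ map (map αk αk) (map αk αk) ∘ₗ
          (tensorTensorTensorComm K H H H H).toLinearMap ∘ₗ
          map (HB.comul ∘ₗ u) (HB.comul ∘ₗ v) := by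
    refine ext' fun x y => ?_
    have hμ : HB.str.toLinearMap ∘ₗ lift HB.mul
        = (HB.str ^ (1 - k)).toLinearMap ∘ₗ lift HB.mul ∘ₗ map αk αk := by
      refine ext' fun p q => ?_
      simp [αk, ← HB.str_zpow_mul, HB.str.zpow_apply_zpow_apply]
    simp only [LinearMap.comp_apply, map_tmul, lift.tmul, mk_apply]
    rw [hB.one_tmul_mul_one_tmul hact, hμ, map_map, map_map]
    rfl
  have hcomul : map (map αk αk) (map αk αk) ∘ₗ map (HB.comul ∘ₗ u) (HB.comul ∘ₗ v) ∘ₗ HB.comul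
      = map (HB.comul ∘ₗ u) (HB.comul ∘ₗ v) ∘ₗ HB.comul ∘ₗ αk := by
    have hΔ : ∀ w : H →ₗ[K] H, HB.StrCommute w →
        map αk αk ∘ₗ HB.comul ∘ₗ w = HB.comul ∘ₗ w ∘ₗ αk := fun w hw =>
      LinearMap.ext fun y => by simp [αk, HB.comul_str_zpow, w.apply_zpow_apply_of_comm hw]
    ext x
    simp only [LinearMap.comp_apply, map_map, hΔ u hu, hΔ v hv]
    rw [show HB.comul (αk x) = map αk αk (HB.comul x) from HB.comul_str_zpow k x, map_map]
    rfl
  have hT := LinearMap.congr_fun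
    (tensorTensorTensorComm_comp_map (f := αk) (g := αk) (h := αk) (j := αk))
    (map (HB.comul ∘ₗ u) (HB.comul ∘ₗ v) (HB.comul h))
  have hc := LinearMap.congr_fun hcomul h
  simp only [LinearMap.comp_apply, LinearEquiv.coe_coe] at hT hc
  rw [← LinearMap.comp_apply (lift B.mul), hmul]
  simp only [LinearMap.comp_apply, LinearEquiv.coe_coe]
  rw [← hT, hc, huv, map_smul, map_tmul]
  simp [αk, AA.str_one, HB.str_zpow_one, HB.counit_str_zpow]

/-- `W` gives the value of `Φ` on the summand `(a₁ ⊗ α^m(a₂₍₋₁₎)α⁻¹(h₁)) ⊗ (γ(a₂₍₀₎) ⊗ h₂)`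
of `Δ(a ⊗ h)` as a function of `a₁ ⊗ (a₂₍₋₁₎ ⊗ a₂₍₀₎)` and `h₁ ⊗ h₂`. -/
theorem map_comul_tmul (hB : IsRadfordBiproduct HB AA AC act coact σ m k B)
    {V : Type*} [AddCommGroup V] [Module K V]
    (Φ : (A ⊗[K] H) ⊗[K] (A ⊗[K] H) →ₗ[K] V)
    (W : (A ⊗[K] (H ⊗[K] A)) ⊗[K] (H ⊗[K] H) →ₗ[K] V)
    (hΦW : ∀ (a₁ : A) (w : H) (a₂ : A) (g₁ g₂ : H),
      Φ ((a₁ ⊗ₜ HB.mul ((HB.str ^ m) w) ((HB.str ^ (-1 : ℤ)) g₁)) ⊗ₜ (AC.str a₂ ⊗ₜ g₂))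
        = W ((a₁ ⊗ₜ (w ⊗ₜ a₂)) ⊗ₜ (g₁ ⊗ₜ g₂)))
    (a : A) (h : H) :
    Φ (B.comul (a ⊗ₜ h)) = W (map LinearMap.id coact (AC.comul a) ⊗ₜ HB.comul h) := by
  have e : Φ ∘ₗ map
        (map LinearMap.id (lift HB.mul ∘ₗ
            map (HB.str ^ m).toLinearMap (HB.str ^ (-1 : ℤ)).toLinearMap) ∘ₗ
          (TensorProduct.assoc K A H H).toLinearMap)
        (map AC.str.toLinearMap LinearMap.id) ∘ₗ
        (tensorTensorTensorComm K (A ⊗[K] H) A H H).toLinearMap ∘ₗ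
        map (TensorProduct.assoc K A H A).symm.toLinearMap LinearMap.id = W := by
    ext a₁ w a₂ g₁ g₂
    simpa using hΦW a₁ w a₂ g₁ g₂
  rw [hB.comul_def, scComulElem, ← e]
  rfl

theorem map_mapA_mapA_comul (hB : IsRadfordBiproduct HB AA AC act coact σ m k B)
    (hcc : IsComoduleCoalgebra HB AC coact) (u v : A →ₗ[K] A) (a : A) (h : H) :
    map (mapA HB u) (mapA HB v) (B.comul (a ⊗ₜ h))
      = HB.counit h • map ((TensorProduct.mk K A H).flip HB.one ∘ₗ u)
          ((TensorProduct.mk K A H).flip HB.one ∘ₗ v) (AC.comul a) := by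
  let εA : H ⊗[K] A →ₗ[K] A := (TensorProduct.lid K A).toLinearMap ∘ₗ map HB.counit LinearMap.id
  let εH : H ⊗[K] H →ₗ[K] K := HB.counit ∘ₗ (TensorProduct.lid K H).toLinearMap ∘ₗ
    map HB.counit LinearMap.id
  rw [map_comul_tmul hB _ ((TensorProduct.rid K _).toLinearMap ∘ₗ
      map (map ((TensorProduct.mk K A H).flip HB.one ∘ₗ u)
        ((TensorProduct.mk K A H).flip HB.one ∘ₗ v ∘ₗ AC.str.toLinearMap ∘ₗ εA)) εH)]
  · have hεA : εA ∘ₗ coact = AC.str.symm.toLinearMap :=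
      LinearMap.ext hcc.counit_coact
    simp [εA, εH, map_map, LinearMap.comp_assoc, hεA, HB.counit_comul_left, HB.counit_str_symm]
  · intro a₁ w a₂ g₁ g₂
    simp [εA, εH, mapA, HomBialgebraStr.convOne_apply, HB.counit_mul, HB.counit_str_zpow,
      HB.counit_str_symm, tmul_smul, ← smul_tmul', smul_smul, mul_comm, mul_left_comm]

/-- A consequence of the right counit axiom of `B` at `a ⊗ 1`. -/
theorem coalgebra_str_eq (hB : IsRadfordBiproduct HB AA AC act coact σ m k B)
    (hcc : IsComoduleCoalgebra HB AC coact) : AC.str = AA.str := by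
  let Ψ : (A ⊗[K] H) ⊗[K] (A ⊗[K] H) →ₗ[K] A ⊗[K] H :=
    (TensorProduct.rid K _).toLinearMap ∘ₗ map LinearMap.id B.counit
  have hΨ : mapA HB LinearMap.id ∘ₗ Ψ
      = Ψ ∘ₗ map (mapA HB LinearMap.id) (mapA HB LinearMap.id) := by
    ext a₁ g₁ a₂ g₂
    simp [Ψ, mapA, HomBialgebraStr.convOne_apply, hB.counit_def, HB.counit_one, tmul_smul,
      ← smul_tmul', smul_smul, mul_comm, mul_assoc]
  have hΨ' : Ψ ∘ₗ map ((TensorProduct.mk K A H).flip HB.one ∘ₗ LinearMap.id)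
        ((TensorProduct.mk K A H).flip HB.one ∘ₗ LinearMap.id)
      = (TensorProduct.mk K A H).flip HB.one ∘ₗ (TensorProduct.rid K A).toLinearMap ∘ₗ
          map LinearMap.id AC.counit := by
    ext a₁ a₂
    simp [Ψ, hB.counit_def, HB.counit_one, smul_tmul']
  suffices key : ∀ a, AC.str.symm a ⊗ₜ[K] HB.one = AA.str.symm a ⊗ₜ[K] HB.one by
    refine LinearEquiv.symm_bijective.injective (LinearEquiv.ext fun a => ?_)
    simpa [HB.counit_one] using
      congrArg ((TensorProduct.rid K A).toLinearMap ∘ₗ map LinearMap.id HB.counit) (key a)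
  intro a
  have h : mapA HB LinearMap.id (Ψ (B.comul (a ⊗ₜ HB.one)))
      = Ψ (map (mapA HB LinearMap.id) (mapA HB LinearMap.id) (B.comul (a ⊗ₜ HB.one))) :=
    LinearMap.congr_fun hΨ _
  have hl : Ψ (B.comul (a ⊗ₜ HB.one)) = B.str.symm (a ⊗ₜ HB.one) := B.counit_comul_right _
  rw [hl, map_mapA_mapA_comul hB hcc, map_smul, ← LinearMap.comp_apply Ψ, hΨ'] at h
  simpa [hB.str_def, mapA, HomBialgebraStr.convOne_apply, HB.counit_one, AC.counit_comul_right,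
    HB.counit_str_symm] using h.symm

theorem map_mapH_mapH_comul (hB : IsRadfordBiproduct HB AA AC act coact σ m k B)
    (hcc : IsComoduleCoalgebra HB AC coact) (u v : H →ₗ[K] H) (a : A) (h : H) :
    map (mapH AA AC u) (mapH AA AC v) (B.comul (a ⊗ₜ h))
      = AC.counit a • map (TensorProduct.mk K A H AA.one ∘ₗ u)
          (TensorProduct.mk K A H AA.one ∘ₗ v) (HB.comul h) := by
  let X : A ⊗[K] (H ⊗[K] A) →ₗ[K] H := (TensorProduct.lid K H).toLinearMap ∘ₗ
    map AC.counit ((TensorProduct.rid K H).toLinearMap ∘ₗ map LinearMap.id AC.counit)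
  let Z : H ⊗[K] (H ⊗[K] H) →ₗ[K] (A ⊗[K] H) ⊗[K] (A ⊗[K] H) :=
    map (TensorProduct.mk K A H AA.one ∘ₗ u ∘ₗ lift HB.mul ∘ₗ
        map (HB.str ^ m).toLinearMap (HB.str ^ (-1 : ℤ)).toLinearMap)
      (TensorProduct.mk K A H AA.one ∘ₗ v) ∘ₗ (TensorProduct.assoc K H H H).symm.toLinearMap
  rw [map_comul_tmul hB _ (Z ∘ₗ map X LinearMap.id)]
  · have hX : X (map LinearMap.id coact (AC.comul a)) = AC.counit a • HB.one := by
      have hcoact : (TensorProduct.rid K H).toLinearMap ∘ₗ map LinearMap.id AC.counit ∘ₗ coact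
          = AC.counit.smulRight HB.one := LinearMap.ext hcc.counit_coact_one
      have hXc : X ∘ₗ map LinearMap.id coact = AC.counit.smulRight HB.one ∘ₗ
          (TensorProduct.lid K A).toLinearMap ∘ₗ map AC.counit LinearMap.id := by
        ext a₁ a₂
        simpa [X, smul_smul, mul_comm] using
          congrArg (AC.counit a₁ • ·) (LinearMap.congr_fun hcoact a₂)
      simpa [AC.counit_comul_left, AC.counit_str_symm] using
        LinearMap.congr_fun hXc (AC.comul a)
    have hZ : Z ∘ₗ TensorProduct.mk K H (H ⊗[K] H) HB.one
        = map (TensorProduct.mk K A H AA.one ∘ₗ u) (TensorProduct.mk K A H AA.one ∘ₗ v) := by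
      ext g₁ g₂
      simp [Z, HB.str_zpow_one, HB.one_mul]
    rw [LinearMap.comp_apply, map_tmul, hX, LinearMap.id_apply, smul_tmul, tmul_smul, map_smul,
      ← hZ]
    rfl
  · intro a₁ w a₂ g₁ g₂
    simp [X, Z, mapH, AC.counit_str, tmul_smul, ← smul_tmul', smul_smul]

theorem map_mapA_mapH_comul (hB : IsRadfordBiproduct HB AA AC act coact σ m k B)
    (hcc : IsComoduleCoalgebra HB AC coact) (u : A →ₗ[K] A) (v : H →ₗ[K] H) (a : A) (h : H) :
    map (mapA HB u) (mapH AA AC v) (B.comul (a ⊗ₜ h))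
      = (u (AA.str.symm a) ⊗ₜ HB.one) ⊗ₜ (AA.one ⊗ₜ v (HB.str.symm h)) := by
  let εA : H ⊗[K] A →ₗ[K] A := (TensorProduct.lid K A).toLinearMap ∘ₗ map HB.counit LinearMap.id
  let εH : H ⊗[K] H →ₗ[K] H := (TensorProduct.lid K H).toLinearMap ∘ₗ map HB.counit LinearMap.id
  rw [map_comul_tmul hB _ (map
      ((TensorProduct.mk K A H).flip HB.one ∘ₗ u ∘ₗ (TensorProduct.rid K A).toLinearMap ∘ₗ
        map LinearMap.id (AC.counit ∘ₗ εA))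
      (TensorProduct.mk K A H AA.one ∘ₗ v ∘ₗ εH))]
  · have hεA : AC.counit ∘ₗ (TensorProduct.lid K A).toLinearMap ∘ₗ
        map HB.counit LinearMap.id ∘ₗ coact = AC.counit :=
      LinearMap.ext fun a => by simp [hcc.counit_coact a, AC.counit_str_symm]
    simp [εA, εH, map_map, LinearMap.comp_assoc, hεA, HB.counit_comul_left,
      AC.counit_comul_right, ← hB.coalgebra_str_eq hcc]
  · intro a₁ w a₂ g₁ g₂
    simp [εA, εH, mapA, mapH, HomBialgebraStr.convOne_apply, HB.counit_mul,
      HB.counit_str_zpow, HB.counit_str_symm, AC.counit_str, tmul_smul, ← smul_tmul', smul_smul,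
      mul_assoc, mul_comm, mul_left_comm]

theorem map_mapH_mapA_comul (hB : IsRadfordBiproduct HB AA AC act coact σ m k B)
    (hcc : IsComoduleCoalgebra HB AC coact) (u : H →ₗ[K] H) (v : A →ₗ[K] A) (a : A) (h : H) :
    map (mapH AA AC u) (mapA HB v) (B.comul (a ⊗ₜ h))
      = map (TensorProduct.mk K A H AA.one ∘ₗ u ∘ₗ HB.mul.flip ((HB.str ^ (-2 : ℤ)) h) ∘ₗ
          (HB.str ^ (m - 1)).toLinearMap) ((TensorProduct.mk K A H).flip HB.one ∘ₗ v)
          (coact a) := by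
  let Z : (H ⊗[K] A) ⊗[K] H →ₗ[K] (A ⊗[K] H) ⊗[K] (A ⊗[K] H) :=
    map (TensorProduct.mk K A H AA.one ∘ₗ u ∘ₗ lift HB.mul ∘ₗ
        map (HB.str ^ m).toLinearMap (HB.str ^ (-1 : ℤ)).toLinearMap)
      ((TensorProduct.mk K A H).flip HB.one ∘ₗ v ∘ₗ AC.str.toLinearMap) ∘ₗ
    (TensorProduct.rightComm K H A H).toLinearMap
  rw [map_comul_tmul hB _ (Z ∘ₗ map
      ((TensorProduct.lid K (H ⊗[K] A)).toLinearMap ∘ₗ map AC.counit LinearMap.id)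
      ((TensorProduct.rid K H).toLinearMap ∘ₗ map LinearMap.id HB.counit))]
  · have hX : (TensorProduct.lid K (H ⊗[K] A)).toLinearMap ∘ₗ map AC.counit LinearMap.id ∘ₗ
        map LinearMap.id coact = coact ∘ₗ (TensorProduct.lid K A).toLinearMap ∘ₗ
          map AC.counit LinearMap.id := by
      ext a₁ a₂; simp
    have hZ : Z ∘ₗ (TensorProduct.mk K (H ⊗[K] A) H).flip (HB.str.symm h) ∘ₗ
          map HB.str.symm.toLinearMap AC.str.symm.toLinearMap
        = map (TensorProduct.mk K A H AA.one ∘ₗ u ∘ₗ HB.mul.flip ((HB.str ^ (-2 : ℤ)) h) ∘ₗ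
            (HB.str ^ (m - 1)).toLinearMap) ((TensorProduct.mk K A H).flip HB.one ∘ₗ v) := by
      refine ext' fun w a₀ => ?_
      simp only [Z, LinearMap.comp_apply, LinearEquiv.coe_coe, map_tmul, LinearMap.flip_apply,
        mk_apply, rightComm_tmul, lift.tmul, LinearEquiv.apply_symm_apply]
      rw [← HB.str.zpow_neg_one_apply, ← HB.str.zpow_neg_one_apply,
        HB.str.zpow_apply_zpow_apply, HB.str.zpow_apply_zpow_apply, ← sub_eq_add_neg]
      rfl
    have hXa : ((TensorProduct.lid K (H ⊗[K] A)).toLinearMap ∘ₗ map AC.counit LinearMap.id)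
          (map LinearMap.id coact (AC.comul a))
        = map HB.str.symm.toLinearMap AC.str.symm.toLinearMap (coact a) := by
      rw [← LinearMap.comp_apply _ (map LinearMap.id coact), LinearMap.comp_assoc, hX,
        ← hcc.coact_str_symm, ← AC.counit_comul_left]
      rfl
    have hYh : ((TensorProduct.rid K H).toLinearMap ∘ₗ map LinearMap.id HB.counit) (HB.comul h)
        = HB.str.symm h := HB.counit_comul_right h
    rw [LinearMap.comp_apply, map_tmul, hXa, hYh, ← hZ]
    rfl
  · intro a₁ w a₂ g₁ g₂
    simp [Z, mapA, mapH, HomBialgebraStr.convOne_apply, tmul_smul,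
      ← smul_tmul', smul_smul]

theorem conv_mapH_mapA (hB : IsRadfordBiproduct HB AA AC act coact σ m k B)
    (hcc : IsComoduleCoalgebra HB AC coact) (u : H →ₗ[K] H) (v : A →ₗ[K] A) (a : A) (h : H) :
    B.conv (mapH AA AC u) (mapA HB v) (a ⊗ₜ h)
      = radfordAntipodeElem HB AA coact B.mul u v m a h := by
  rw [HomBialgebraStr.conv_apply, hB.map_mapH_mapA_comul hcc]
  rfl

theorem strCommute_map (hB : IsRadfordBiproduct HB AA AC act coact σ m k B)
    {u : A →ₗ[K] A} {v : H →ₗ[K] H} (hu : ∀ b, u (AA.str b) = AA.str (u b))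
    (hv : HB.StrCommute v) : B.StrCommute (map u v) := fun x => by
  rw [hB.str_def]
  induction x using TensorProduct.induction_on with
  | zero => simp
  | tmul b g => simp [hu, hv g]
  | add x y hx hy => simp only [map_add, hx, hy]

theorem strCommute_mapA (hB : IsRadfordBiproduct HB AA AC act coact σ m k B)
    {u : A →ₗ[K] A} (hu : ∀ b, u (AA.str b) = AA.str (u b)) : B.StrCommute (mapA HB u) :=
  hB.strCommute_map hu HB.strCommute_convOne

theorem strCommute_mapH (hB : IsRadfordBiproduct HB AA AC act coact σ m k B)
    {v : H →ₗ[K] H} (hv : HB.StrCommute v) : B.StrCommute (mapH AA AC v) :=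
  hB.strCommute_map (fun b => by simp [hB.counit_str, AA.str_one]) hv

theorem conv_mapA_mapA (hB : IsRadfordBiproduct HB AA AC act coact σ m k B)
    (hact : IsWeakModuleAlgebra HB AA act) (hcc : IsComoduleCoalgebra HB AC coact)
    (u v : A →ₗ[K] A) (a : A) (h : H) :
    B.conv (mapA HB u) (mapA HB v) (a ⊗ₜ h)
      = HB.counit h • (lift ((AA.mul ∘ₗ u).compl₂ v) (AC.comul a) ⊗ₜ HB.one) := by
  have hmul : lift B.mul ∘ₗ map ((TensorProduct.mk K A H).flip HB.one ∘ₗ u)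
      ((TensorProduct.mk K A H).flip HB.one ∘ₗ v)
      = (TensorProduct.mk K A H).flip HB.one ∘ₗ lift ((AA.mul ∘ₗ u).compl₂ v) :=
    ext' fun x y => by simp [hB.mul_tmul_one_tmul hact, HB.str_one]
  rw [HomBialgebraStr.conv_apply, hB.map_mapA_mapA_comul hcc, map_smul,
    ← LinearMap.comp_apply (lift B.mul), hmul]
  rfl

theorem isConvInverse_mapA (hB : IsRadfordBiproduct HB AA AC act coact σ m k B)
    (hact : IsWeakModuleAlgebra HB AA act) (hcc : IsComoduleCoalgebra HB AC coact)
    {SA : A →ₗ[K] A} (hSA : IsConvInvOfId AA AC SA) :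
    B.IsConvInverse (mapA HB LinearMap.id) (mapA HB SA) := by
  constructor <;> refine ext' fun a h => ?_ <;>
    simp [hB.conv_mapA_mapA hact hcc, hSA.1, hSA.2, HomBialgebraStr.convOne_apply,
      hB.counit_def, hB.one_def, smul_tmul', smul_smul, mul_comm]

theorem isConvInverse_mapH (hB : IsRadfordBiproduct HB AA AC act coact σ m k B)
    (hact : IsWeakModuleAlgebra HB AA act) (hcc : IsComoduleCoalgebra HB AC coact)
    {SH : H →ₗ[K] H} (hSH : IsSigmaAntipode HB AA σ SH) :
    B.IsConvInverse (mapH AA AC LinearMap.id) (mapH AA AC SH) := by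
  have hid : HB.StrCommute LinearMap.id := fun _ => rfl
  constructor <;> refine ext' fun a h => ?_ <;>
    rw [HomBialgebraStr.conv_apply, hB.map_mapH_mapH_comul hcc, map_smul]
  · rw [hB.lift_mul_map_one_tmul hact hid hSH.antipode_str
      (by simpa only [LinearMap.comp_id] using hSH.right)]
    simp [HomBialgebraStr.convOne_apply, hB.counit_def, hB.one_def, smul_smul]
  · rw [hB.lift_mul_map_one_tmul hact hSH.antipode_str hid
      (by simpa only [LinearMap.comp_id] using hSH.left)]
    simp [HomBialgebraStr.convOne_apply, hB.counit_def, hB.one_def, smul_smul]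

theorem conv_mapA_mapH_id (hB : IsRadfordBiproduct HB AA AC act coact σ m k B)
    (hact : IsWeakModuleAlgebra HB AA act) (hcc : IsComoduleCoalgebra HB AC coact) :
    B.conv (mapA HB LinearMap.id) (mapH AA AC LinearMap.id) = LinearMap.id :=
  ext' fun a h => by
    simp [HomBialgebraStr.conv_apply, hB.map_mapA_mapH_comul hcc, hB.mul_tmul_one_tmul hact,
      AA.mul_one]

end IsRadfordBiproduct

/-- Theorem 3.5: the Radford `[(m,k),m]`-biproduct is a monoidal Hom-Hopf algebra with the
stated antipode. -/
theorem radford_biproduct_hopf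
    {K H A : Type*} [Field K] [AddCommGroup H] [Module K H] [AddCommGroup A] [Module K A]
    (HB : HomBialgebraStr K H) (AA : HomAlgebraStr K A) (AC : HomCoalgebraStr K A)
    (act : H →ₗ[K] A →ₗ[K] A) (hact : IsWeakModuleAlgebra HB AA act)
    (coact : A →ₗ[K] H ⊗[K] A) (hcc : IsComoduleCoalgebra HB AC coact)
    (σ : H →ₗ[K] H →ₗ[K] A) (m k : ℤ)
    (B : HomBialgebraStr K (A ⊗[K] H))
    (hB : IsRadfordBiproduct HB AA AC act coact σ m k B)
    (SH : H →ₗ[K] H) (hSH : IsSigmaAntipode HB AA σ SH)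
    (SA : A →ₗ[K] A) (hSA : IsConvInvOfId AA AC SA)
    (hSAstr : ∀ a : A, SA (AA.str a) = AA.str (SA a)) :
    ∃ HS : HomHopfStr K (A ⊗[K] H),
      HS.toHomBialgebraStr = B
      ∧ ∀ (a : A) (h : H),
          HS.antipode (a ⊗ₜ[K] h) = radfordAntipodeElem HB AA coact B.mul SH SA m a h := by
  have hF := hB.strCommute_mapA (u := LinearMap.id) fun _ => rfl
  have hG := hB.strCommute_mapH (v := LinearMap.id) fun _ => rfl
  have hF' := hB.strCommute_mapA hSAstr
  have hG' := hB.strCommute_mapH hSH.antipode_str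
  have hS := (hB.isConvInverse_mapA hact hcc hSA).conv hF hF' hG hG'
    (hB.isConvInverse_mapH hact hcc hSH)
  rw [hB.conv_mapA_mapH_id hact hcc] at hS
  exact ⟨B.toHomHopfStr _ (hG'.conv hF') hS, rfl, hB.conv_mapH_mapA hcc SH SA⟩
end
end
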